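/- arXiv:2312.05844 — 9 statements merged into one kernel-verified Lean document; each statement's English description precedes it below -/
import Mathlib

section
/- For all x ∈ ℂ and τ ∈ ℂ with Im τ > 0, one has √2·θ(2x, 4τ) + θ(x, τ) = (1 + √2)·(√2·θ_{1/2,0}(2x, 4τ) + θ_{0,1/2}(x, τ)). -/
open Complex

/-- The Jacobi theta function `θ(x, τ) = ∑_{m ∈ ℤ} exp(πiτm² + 2πimx)`. -/
noncomputable def theta (x τ : ℂ) : ℂ :=
  ∑' m : ℤ, Complex.exp (Real.pi * Complex.I * τ * (m : ℂ) ^ 2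
    + 2 * Real.pi * Complex.I * (m : ℂ) * x)

/-- The theta function with real characteristics `(a, b)`:
`θ_{a,b}(x, τ) = ∑_{m ∈ ℤ} exp(πiτ(m+a)² + 2πi(m+a)(x+b))`. -/
noncomputable def thetaChar (a b : ℝ) (x τ : ℂ) : ℂ :=
  ∑' m : ℤ, Complex.exp (Real.pi * Complex.I * τ * ((m : ℂ) + (a : ℂ)) ^ 2
    + 2 * Real.pi * Complex.I * ((m : ℂ) + (a : ℂ)) * (x + (b : ℂ)))

/-- Equivalence of ℤ with the even integers. -/
def evenIntEquiv : ℤ ≃ {m : ℤ | Even m} where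
  toFun n := ⟨2 * n, ⟨n, two_mul n⟩⟩
  invFun m := m.1 / 2
  left_inv n := by show 2 * n / 2 = n; omega
  right_inv m := by
    obtain ⟨m, k, hk⟩ := m
    apply Subtype.ext
    simp only
    omega

/-- Equivalence of ℤ with the odd integers. -/
def oddIntEquiv : ℤ ≃ ↥({m : ℤ | Even m}ᶜ) where
  toFun n := ⟨2 * n + 1, by simp [Set.mem_setOf_eq, Int.even_add_one, parity_simps]⟩
  invFun m := m.1 / 2
  left_inv n := by show (2 * n + 1) / 2 = n; omega
  right_inv m := by
    obtain ⟨m, hm⟩ := m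
    have : ¬ Even m := hm
    rw [Int.not_even_iff] at this
    apply Subtype.ext
    simp only
    omega

lemma tsum_int_even_add_odd {f : ℤ → ℂ} (hf : Summable f) :
    ∑' m : ℤ, f m = (∑' n : ℤ, f (2 * n)) + ∑' n : ℤ, f (2 * n + 1) := by
  have hA : ∑' n : ℤ, f (2 * n) = ∑' m : {m : ℤ | Even m}, f m :=
    evenIntEquiv.tsum_eq (fun m : {m : ℤ | Even m} => f m.1)
  have hB : ∑' n : ℤ, f (2 * n + 1) = ∑' m : ↥({m : ℤ | Even m}ᶜ), f m :=
    oddIntEquiv.tsum_eq (fun m : ↥({m : ℤ | Even m}ᶜ) => f m.1)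
  rw [hA, hB, Summable.tsum_add_tsum_compl (hf.subtype _) (hf.subtype _)]

theorem stmt_0 (x τ : ℂ) (hτ : 0 < τ.im) :
    (Real.sqrt 2 : ℂ) * theta (2 * x) (4 * τ) + theta x τ =
      (1 + (Real.sqrt 2 : ℂ)) *
        ((Real.sqrt 2 : ℂ) * thetaChar (1/2) 0 (2 * x) (4 * τ) + thetaChar 0 (1/2) x τ) := by
  set f : ℤ → ℂ := fun m => Complex.exp (Real.pi * Complex.I * τ * (m : ℂ) ^ 2
    + 2 * Real.pi * Complex.I * (m : ℂ) * x) with hf_def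
  set g : ℤ → ℂ := fun m => Complex.exp (Real.pi * Complex.I * τ * (m : ℂ) ^ 2
    + 2 * Real.pi * Complex.I * (m : ℂ) * (x + (1/2 : ℝ))) with hg_def
  have hfs : Summable f := by
    have := (summable_jacobiTheta₂_term_iff x τ).mpr hτ
    refine this.congr fun m => ?_
    simp only [jacobiTheta₂_term, hf_def]
    congr 1
    ring
  have hgs : Summable g := by
    have := (summable_jacobiTheta₂_term_iff (x + (1/2 : ℝ)) τ).mpr hτ
    refine this.congr fun m => ?_
    simp only [jacobiTheta₂_term, hg_def]
    congr 1
    ring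
  have exp2pi : ∀ n : ℤ, Complex.exp (2 * Real.pi * Complex.I * n) = 1 := by
    intro n
    rw [show (2 : ℂ) * Real.pi * Complex.I * n = n * (2 * Real.pi * Complex.I) by ring]
    exact Complex.exp_int_mul_two_pi_mul_I n
  -- even/odd splits
  have hAeven : ∀ n : ℤ, f (2 * n) = Complex.exp (Real.pi * Complex.I * (4 * τ) * (n : ℂ) ^ 2
      + 2 * Real.pi * Complex.I * (n : ℂ) * (2 * x)) := by
    intro n; simp only [hf_def]; congr 1; push_cast; ring
  have hBodd : ∀ n : ℤ, f (2 * n + 1) =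
      Complex.exp (Real.pi * Complex.I * (4 * τ) * ((n : ℂ) + ((1:ℝ)/2 : ℝ)) ^ 2
      + 2 * Real.pi * Complex.I * ((n : ℂ) + ((1:ℝ)/2 : ℝ)) * (2 * x + ((0:ℝ) : ℂ))) := by
    intro n; simp only [hf_def]; congr 1; push_cast; ring
  have hsplitf : theta x τ = theta (2 * x) (4 * τ) + thetaChar (1/2) 0 (2 * x) (4 * τ) := by
    show ∑' m : ℤ, f m = _
    rw [tsum_int_even_add_odd hfs, theta, thetaChar]
    congr 1
    · exact tsum_congr hAeven
    · refine tsum_congr fun n => ?_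
      rw [hBodd n]
  have hgeven : ∀ n : ℤ, g (2 * n) = f (2 * n) := by
    intro n
    simp only [hf_def, hg_def]
    have : (Real.pi : ℂ) * Complex.I * τ * ((2*n : ℤ) : ℂ) ^ 2
        + 2 * Real.pi * Complex.I * ((2*n : ℤ) : ℂ) * (x + (1/2 : ℝ))
        = (Real.pi * Complex.I * τ * ((2*n : ℤ) : ℂ) ^ 2
          + 2 * Real.pi * Complex.I * ((2*n : ℤ) : ℂ) * x) + 2 * Real.pi * Complex.I * n := by
      push_cast; ring
    rw [this, Complex.exp_add, exp2pi n, mul_one]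
  have hgodd : ∀ n : ℤ, g (2 * n + 1) = - f (2 * n + 1) := by
    intro n
    simp only [hf_def, hg_def]
    have : (Real.pi : ℂ) * Complex.I * τ * ((2*n+1 : ℤ) : ℂ) ^ 2
        + 2 * Real.pi * Complex.I * ((2*n+1 : ℤ) : ℂ) * (x + (1/2 : ℝ))
        = (Real.pi * Complex.I * τ * ((2*n+1 : ℤ) : ℂ) ^ 2
          + 2 * Real.pi * Complex.I * ((2*n+1 : ℤ) : ℂ) * x)
          + (2 * Real.pi * Complex.I * n + Real.pi * Complex.I) := by
      push_cast; ring
    rw [this, Complex.exp_add, Complex.exp_add, Complex.exp_add, exp2pi n, one_mul,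
      Complex.exp_pi_mul_I]
    ring
  have hsplitg : thetaChar 0 (1/2) x τ =
      theta (2 * x) (4 * τ) - thetaChar (1/2) 0 (2 * x) (4 * τ) := by
    have h1 : thetaChar 0 (1/2) x τ = ∑' m : ℤ, g m := by
      rw [thetaChar]
      refine tsum_congr fun m => ?_
      simp only [hg_def]
      norm_num
    rw [h1, tsum_int_even_add_odd hgs]
    have h2 : ∑' n : ℤ, g (2 * n) = theta (2 * x) (4 * τ) := by
      rw [theta]
      refine tsum_congr fun n => ?_
      rw [hgeven n, hAeven n]
    have h3 : ∑' n : ℤ, g (2 * n + 1) = - thetaChar (1/2) 0 (2 * x) (4 * τ) := by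
      rw [thetaChar, ← tsum_neg]
      refine tsum_congr fun n => ?_
      rw [hgodd n, hBodd n]
    rw [h2, h3]
    ring
  have hs2 : (Real.sqrt 2 : ℂ) * (Real.sqrt 2 : ℂ) = 2 := by
    norm_cast
    exact Real.mul_self_sqrt (by norm_num)
  rw [hsplitf, hsplitg]
  linear_combination (- thetaChar (1/2) 0 (2 * x) (4 * τ)) * hs2
end

section
/- For all x ∈ ℂ and τ ∈ ℂ with Im τ > 0, one has θ(x, τ)·θ_{0,1/2}(x, τ) = θ_{0,1/2}(2x, 2τ)·θ_{0,1/2}(0, 2τ). -/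
open Complex

/-!
Expanding `θ(x, τ) θ(x + 1/2, τ) = ∑_{m,n} e^{πiτ(m² + n²) + 2πi(m + n)x + πin}` as a double series,
the terms with `m + n` odd cancel in pairs under `(m, n) ↦ (n, m)`, which multiplies them by
`(-1)^(m - n) = -1`. The terms with `m + n` even are parametrized by `(m, n) = (r + s, r - s)`, where
`m² + n² = 2r² + 2s²` and `(-1)^n = (-1)^(r + s)`; so that part factors as the product of the two
series in `2τ` on the right.
-/

theorem tsum_eq_zero_of_comp_perm_eq_neg {α G : Type*} [AddCommGroup G] [TopologicalSpace G]
    [IsTopologicalAddGroup G] [T2Space G] [IsAddTorsionFree G] {f : α → G} (σ : Equiv.Perm α)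
    (hf : ∀ a, f (σ a) = -f a) : ∑' a, f a = 0 := by
  refine self_eq_neg.mp ?_
  rw [← tsum_neg, ← σ.tsum_eq]
  exact tsum_congr fun a => hf a

def parityEquiv : Bool × ℤ × ℤ ≃ ℤ × ℤ where
  toFun q := (q.2.1 + q.2.2 + q.1.toNat, q.2.1 - q.2.2)
  invFun p := (decide ((p.1 + p.2) % 2 = 1), (p.1 + p.2) / 2, (p.1 - p.2) / 2)
  left_inv := by
    rintro ⟨_ | _, r, s⟩ <;> simp only [Bool.toNat_false, Bool.toNat_true, Prod.mk.injEq] <;>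
      refine ⟨?_, by omega, by omega⟩ <;> simp <;> omega
  right_inv := by
    rintro ⟨m, n⟩
    by_cases h : (m + n) % 2 = 1 <;> simp [h] <;> omega

@[simp]
theorem parityEquiv_false (r s : ℤ) : parityEquiv (false, r, s) = (r + s, r - s) := by
  simp [parityEquiv]

@[simp]
theorem parityEquiv_true (r s : ℤ) : parityEquiv (true, r, s) = (r + s + 1, r - s) := by
  simp [parityEquiv]

theorem jacobiTheta₂_term_mul_term_add_half_swap (m n : ℤ) (z τ : ℂ) :
    jacobiTheta₂_term m z τ * jacobiTheta₂_term n (z + 1 / 2) τ =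
      (-1) ^ (n - m) * (jacobiTheta₂_term n z τ * jacobiTheta₂_term m (z + 1 / 2) τ) := by
  rw [← exp_pi_mul_I, ← exp_int_mul]
  simp only [jacobiTheta₂_term, ← exp_add]
  congr 1
  push_cast
  ring

theorem jacobiTheta₂_term_add_mul_term_sub_add_half (r s : ℤ) (z τ : ℂ) :
    jacobiTheta₂_term (r + s) z τ * jacobiTheta₂_term (r - s) (z + 1 / 2) τ =
      jacobiTheta₂_term r (2 * z + 1 / 2) (2 * τ) * jacobiTheta₂_term s (1 / 2) (2 * τ) := by
  simp only [jacobiTheta₂_term, ← exp_add]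
  exact exp_eq_exp_iff_exists_int.mpr ⟨-s, by push_cast; ring⟩

theorem jacobiTheta₂_mul_jacobiTheta₂_add_half (z : ℂ) {τ : ℂ} (hτ : 0 < τ.im) :
    jacobiTheta₂ z τ * jacobiTheta₂ (z + 1 / 2) τ =
      jacobiTheta₂ (2 * z + 1 / 2) (2 * τ) * jacobiTheta₂ (1 / 2) (2 * τ) := by
  have hτ₂ : 0 < (2 * τ).im := by simpa using hτ
  have hnorm (w : ℂ) {t : ℂ} (ht : 0 < t.im) : Summable fun n => ‖jacobiTheta₂_term n w t‖ :=
    summable_norm_iff.mpr ((summable_jacobiTheta₂_term_iff w t).mpr ht)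
  set F := fun p : ℤ × ℤ => jacobiTheta₂_term p.1 z τ * jacobiTheta₂_term p.2 (z + 1 / 2) τ
  have hF : Summable fun q => F (parityEquiv q) := parityEquiv.summable_iff.mpr <|
    summable_mul_of_summable_norm (f := (jacobiTheta₂_term · z τ))
      (g := (jacobiTheta₂_term · (z + 1 / 2) τ)) (hnorm z hτ) (hnorm _ hτ)
  have odd_eq_zero : ∑' p, F (parityEquiv (true, p)) = 0 := by
    -- `s ↦ -1 - s` swaps the two coordinates of `parityEquiv (true, r, s)`
    refine tsum_eq_zero_of_comp_perm_eq_neg ((Equiv.refl ℤ).prodCongr (Equiv.subLeft (-1)))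
      fun ⟨r, s⟩ => ?_
    have hm : r + (-1 - s) + 1 = r - s := by ring
    have hn : r - (-1 - s) = r + s + 1 := by ring
    simp only [F, Equiv.prodCongr_apply, Equiv.coe_refl, Equiv.subLeft_apply, Prod.map_apply,
      id_eq, parityEquiv_true, hm, hn]
    rw [jacobiTheta₂_term_mul_term_add_half_swap, Odd.neg_one_zpow ⟨s, by ring⟩, neg_one_mul]
  calc jacobiTheta₂ z τ * jacobiTheta₂ (z + 1 / 2) τ = ∑' p, F p :=
        tsum_mul_tsum_of_summable_norm (hnorm z hτ) (hnorm _ hτ)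
    _ = ∑' p, F (parityEquiv (false, p)) + ∑' p, F (parityEquiv (true, p)) := by
        rw [← parityEquiv.tsum_eq, hF.tsum_prod' hF.prod_factor, tsum_bool]
    _ = _ := by
        rw [odd_eq_zero, add_zero, jacobiTheta₂, jacobiTheta₂,
          tsum_mul_tsum_of_summable_norm (hnorm _ hτ₂) (hnorm _ hτ₂)]
        refine tsum_congr fun ⟨r, s⟩ => ?_
        simp only [F, parityEquiv_false]
        exact jacobiTheta₂_term_add_mul_term_sub_add_half r s z τ

theorem theta_eq_jacobiTheta₂ (x τ : ℂ) : theta x τ = jacobiTheta₂ x τ :=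
  tsum_congr fun m => by rw [jacobiTheta₂_term]; congr 1; ring

theorem thetaChar_zero_eq_jacobiTheta₂ (b : ℝ) (x τ : ℂ) :
    thetaChar 0 b x τ = jacobiTheta₂ (x + b) τ :=
  tsum_congr fun m => by rw [jacobiTheta₂_term]; congr 1; push_cast; ring

theorem stmt_5 (x τ : ℂ) (hτ : 0 < τ.im) :
    theta x τ * thetaChar 0 (1/2) x τ =
      thetaChar 0 (1/2) (2 * x) (2 * τ) * thetaChar 0 (1/2) 0 (2 * τ) := by
  simp only [theta_eq_jacobiTheta₂, thetaChar_zero_eq_jacobiTheta₂, zero_add]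
  push_cast
  exact jacobiTheta₂_mul_jacobiTheta₂_add_half x hτ
end

section
/- For all x ∈ ℂ and τ ∈ ℂ with Im τ > 0, one has θ_{0,1/2}(0, τ)·θ(x, τ) = θ_{0,1/2}(x, 2τ)² − θ_{1/2,1/2}(x, 2τ)². -/
open Complex

open Real in
lemma aux_summable_norm (z τ : ℂ) (hτ : 0 < τ.im) :
    Summable (fun n : ℤ => ‖jacobiTheta₂_term n z τ‖) := by
  apply (summable_pow_mul_jacobiTheta₂_term_bound |z.im| hτ 0).of_nonneg_of_le
    (fun _ => norm_nonneg _)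
  intro n
  simpa using norm_jacobiTheta₂_term_le hτ le_rfl le_rfl n

theorem stmt_6 (x τ : ℂ) (hτ : 0 < τ.im) :
    thetaChar 0 (1/2) 0 τ * theta x τ =
      thetaChar 0 (1/2) x (2 * τ) ^ 2 - thetaChar (1/2) (1/2) x (2 * τ) ^ 2 := by
  have π := Real.pi
  set c : ℤ → ℂ := fun m => jacobiTheta₂_term m (1/2) τ with hc_def
  set t : ℤ → ℂ := fun m => jacobiTheta₂_term m x τ with ht_def
  set A : ℤ → ℂ := fun m => jacobiTheta₂_term m (x + 1/2) (2*τ) with hA_def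
  set K : ℂ := Complex.exp (Real.pi * Complex.I * τ / 2 + Real.pi * Complex.I * (x + 1/2))
    with hK_def
  set B : ℤ → ℂ := fun m => K * jacobiTheta₂_term m (x + 1/2 + τ) (2*τ) with hB_def
  have h2τ : 0 < (2*τ).im := by
    have : (2*τ).im = 2 * τ.im := by simp
    rw [this]; linarith
  -- identification of the four series
  have e1 : thetaChar 0 (1/2) 0 τ = ∑' m, c m := by
    refine tsum_congr fun m => ?_
    simp only [hc_def, jacobiTheta₂_term]
    exact congrArg Complex.exp (by push_cast; ring)
  have e2 : theta x τ = ∑' m, t m := by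
    refine tsum_congr fun m => ?_
    simp only [ht_def, jacobiTheta₂_term]
    exact congrArg Complex.exp (by push_cast; ring)
  have e3 : thetaChar 0 (1/2) x (2*τ) = ∑' m, A m := by
    refine tsum_congr fun m => ?_
    simp only [hA_def, jacobiTheta₂_term]
    exact congrArg Complex.exp (by push_cast; ring)
  have e4 : thetaChar (1/2) (1/2) x (2*τ) = ∑' m, B m := by
    refine tsum_congr fun m => ?_
    simp only [hB_def, hK_def, jacobiTheta₂_term, ← Complex.exp_add]
    exact congrArg Complex.exp (by push_cast; ring)
  -- summability
  have hc : Summable (fun m => ‖c m‖) := aux_summable_norm _ _ hτ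
  have ht : Summable (fun m => ‖t m‖) := aux_summable_norm _ _ hτ
  have hA : Summable (fun m => ‖A m‖) := aux_summable_norm _ _ h2τ
  have hB : Summable (fun m => ‖B m‖) := by
    have := (aux_summable_norm (x + 1/2 + τ) (2*τ) h2τ).mul_left ‖K‖
    simpa [hB_def, norm_mul] using this
  rw [e1, e2, e3, e4, sq, sq,
    tsum_mul_tsum_of_summable_norm hc ht,
    tsum_mul_tsum_of_summable_norm hA hA,
    tsum_mul_tsum_of_summable_norm hB hB]
  -- the two reindexing injections
  set i₁ : ℤ × ℤ → ℤ × ℤ := fun p => (p.1 - p.2, p.1 + p.2) with hi₁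
  set i₂ : ℤ × ℤ → ℤ × ℤ := fun p => (p.1 - p.2, p.1 + p.2 + 1) with hi₂
  have inj₁ : Function.Injective i₁ := by
    intro p q h
    simp only [hi₁, Prod.mk.injEq, Prod.ext_iff] at h ⊢
    omega
  have inj₂ : Function.Injective i₂ := by
    intro p q h
    simp only [hi₂, Prod.mk.injEq, Prod.ext_iff] at h ⊢
    omega
  have hcompl : IsCompl (Set.range i₁) (Set.range i₂) := by
    have : Set.range i₂ = (Set.range i₁)ᶜ := by
      ext ⟨j, k⟩
      simp only [Set.mem_range, Set.mem_compl_iff, hi₁, hi₂, Prod.mk.injEq, Prod.exists,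
        not_exists]
      constructor
      · rintro ⟨m, n, h1, h2⟩ m' n'
        omega
      · intro h
        rcases Int.emod_two_eq (j + k) with h0 | h1
        · exact absurd ⟨by omega, by omega⟩ (h ((j+k)/2) ((k-j)/2))
        · exact ⟨(j+k-1)/2, (k-j-1)/2, by omega, by omega⟩
    rw [this]
    exact isCompl_compl
  -- termwise identities
  have key1 : ∀ m n : ℤ, c (m - n) * t (m + n) = A m * A n := by
    intro m n
    simp only [hc_def, ht_def, hA_def, jacobiTheta₂_term, ← Complex.exp_add]
    rw [Complex.exp_eq_exp_iff_exists_int]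
    exact ⟨-n, by push_cast; ring⟩
  have key2 : ∀ m n : ℤ, c (m - n) * t (m + n + 1) = -(B m * B n) := by
    intro m n
    have hneg : -(B m * B n) = Complex.exp (Real.pi * Complex.I) * (B m * B n) := by
      rw [Complex.exp_pi_mul_I]; ring
    rw [hneg]
    simp only [hc_def, ht_def, hB_def, hK_def, jacobiTheta₂_term, ← Complex.exp_add]
    rw [Complex.exp_eq_exp_iff_exists_int]
    exact ⟨-n-1, by push_cast; ring⟩
  -- assemble via HasSum
  set g : ℤ × ℤ → ℂ := fun p => c p.1 * t p.2 with hg_def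
  have hAsum : HasSum (fun p : ℤ × ℤ => A p.1 * A p.2)
      (∑' p : ℤ × ℤ, A p.1 * A p.2) :=
    (summable_mul_of_summable_norm hA hA).hasSum
  have hBsum : HasSum (fun p : ℤ × ℤ => B p.1 * B p.2)
      (∑' p : ℤ × ℤ, B p.1 * B p.2) :=
    (summable_mul_of_summable_norm hB hB).hasSum
  have h1 : HasSum (fun p : ℤ × ℤ => g (i₁ p)) (∑' p : ℤ × ℤ, A p.1 * A p.2) := by
    have : (fun p : ℤ × ℤ => g (i₁ p)) = fun p : ℤ × ℤ => A p.1 * A p.2 :=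
      funext fun p => key1 p.1 p.2
    rw [this]; exact hAsum
  have h2 : HasSum (fun p : ℤ × ℤ => g (i₂ p)) (-(∑' p : ℤ × ℤ, B p.1 * B p.2)) := by
    have : (fun p : ℤ × ℤ => g (i₂ p)) = fun p : ℤ × ℤ => -(B p.1 * B p.2) :=
      funext fun p => key2 p.1 p.2
    rw [this]; exact hBsum.neg
  have h1' : HasSum (g ∘ (↑) : Set.range i₁ → ℂ) (∑' p : ℤ × ℤ, A p.1 * A p.2) := by
    rw [← (Equiv.ofInjective i₁ inj₁).hasSum_iff]
    simpa [Function.comp_def] using h1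
  have h2' : HasSum (g ∘ (↑) : Set.range i₂ → ℂ) (-(∑' p : ℤ × ℤ, B p.1 * B p.2)) := by
    rw [← (Equiv.ofInjective i₂ inj₂).hasSum_iff]
    simpa [Function.comp_def] using h2
  have hg : HasSum g ((∑' p : ℤ × ℤ, A p.1 * A p.2) + -(∑' p : ℤ × ℤ, B p.1 * B p.2)) :=
    HasSum.add_isCompl hcompl h1' h2'
  rw [hg.tsum_eq]
  ring
end

section
/- For all x ∈ ℂ and τ ∈ ℂ with Im τ > 0, one has θ(x, τ)·θ_{0,1/3}(x, τ) = θ_{0,1/3}(2x, 2τ)·θ_{0,−1/3}(0, 2τ) + θ_{1/2,1/3}(2x, 2τ)·θ_{1/2,−1/3}(0, 2τ). -/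
open Complex

namespace Stmt7Aux

/-- The general term of a theta series with characteristics. -/
noncomputable def T (a b : ℝ) (x τ : ℂ) (m : ℤ) : ℂ :=
  Complex.exp (Real.pi * Complex.I * τ * ((m : ℂ) + (a : ℂ)) ^ 2
    + 2 * Real.pi * Complex.I * ((m : ℂ) + (a : ℂ)) * (x + (b : ℂ)))

lemma thetaChar_eq (a b : ℝ) (x τ : ℂ) : thetaChar a b x τ = ∑' m : ℤ, T a b x τ m := rfl

lemma theta_eq (x τ : ℂ) : theta x τ = ∑' m : ℤ, T 0 0 x τ m := by
  unfold theta T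
  refine tsum_congr fun m => ?_
  push_cast
  ring_nf

lemma summable_norm_jacobi (z : ℂ) {τ : ℂ} (hτ : 0 < τ.im) :
    Summable fun n : ℤ => ‖jacobiTheta₂_term n z τ‖ := by
  refine (summable_pow_mul_jacobiTheta₂_term_bound |z.im| hτ 0).of_nonneg_of_le
    (fun _ => norm_nonneg _) ?_
  simpa only [pow_zero, one_mul] using norm_jacobiTheta₂_term_le hτ le_rfl le_rfl

lemma T_eq (a b : ℝ) (x τ : ℂ) (m : ℤ) :
    T a b x τ m = Complex.exp (Real.pi * Complex.I * τ * (a : ℂ) ^ 2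
      + 2 * Real.pi * Complex.I * (a : ℂ) * (x + (b : ℂ)))
      * jacobiTheta₂_term m (x + (b : ℂ) + (a : ℂ) * τ) τ := by
  rw [T, jacobiTheta₂_term, ← Complex.exp_add]
  congr 1
  ring

lemma summable_norm_T (a b : ℝ) (x : ℂ) {τ : ℂ} (hτ : 0 < τ.im) :
    Summable fun m : ℤ => ‖T a b x τ m‖ := by
  refine ((summable_norm_jacobi (x + (b : ℂ) + (a : ℂ) * τ) hτ).mul_left
    ‖Complex.exp (Real.pi * Complex.I * τ * (a : ℂ) ^ 2
      + 2 * Real.pi * Complex.I * (a : ℂ) * (x + (b : ℂ)))‖).congr fun m => ?_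
  rw [← norm_mul, ← T_eq]

/-- Reindexing the even-diagonal part of `ℤ × ℤ`. -/
def e₀ : ℤ × ℤ ≃ {mn : ℤ × ℤ | (mn.1 + mn.2) % 2 = 0} where
  toFun pq := ⟨(pq.1 + pq.2, pq.1 - pq.2), by simp; omega⟩
  invFun mn := ((mn.1.1 + mn.1.2) / 2, (mn.1.1 - mn.1.2) / 2)
  left_inv pq := by
    obtain ⟨p, q⟩ := pq
    simp only
    exact Prod.ext (by omega) (by omega)
  right_inv mn := by
    obtain ⟨⟨m, n⟩, h⟩ := mn
    simp only [Set.mem_setOf_eq] at h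
    apply Subtype.ext
    simp only
    exact Prod.ext (by omega) (by omega)

/-- Reindexing the odd-diagonal part of `ℤ × ℤ`. -/
def e₁ : ℤ × ℤ ≃ ↥({mn : ℤ × ℤ | (mn.1 + mn.2) % 2 = 0}ᶜ : Set (ℤ × ℤ)) where
  toFun pq := ⟨(pq.1 + pq.2 + 1, pq.1 - pq.2), by simp; omega⟩
  invFun mn := ((mn.1.1 + mn.1.2 - 1) / 2, (mn.1.1 - mn.1.2 - 1) / 2)
  left_inv pq := by
    obtain ⟨p, q⟩ := pq
    simp only
    exact Prod.ext (by omega) (by omega)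
  right_inv mn := by
    obtain ⟨⟨m, n⟩, h⟩ := mn
    simp only [Set.mem_compl_iff, Set.mem_setOf_eq] at h
    apply Subtype.ext
    simp only
    exact Prod.ext (by omega) (by omega)

lemma key0 (x τ : ℂ) (p q : ℤ) :
    T 0 0 x τ (p + q) * T 0 (1/3) x τ (p - q) =
      T 0 (1/3) (2 * x) (2 * τ) p * T 0 (-(1/3)) 0 (2 * τ) q := by
  unfold T
  rw [← Complex.exp_add, ← Complex.exp_add]
  congr 1
  push_cast
  ring

lemma key1 (x τ : ℂ) (p q : ℤ) :
    T 0 0 x τ (p + q + 1) * T 0 (1/3) x τ (p - q) =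
      T (1/2) (1/3) (2 * x) (2 * τ) p * T (1/2) (-(1/3)) 0 (2 * τ) q := by
  unfold T
  rw [← Complex.exp_add, ← Complex.exp_add]
  congr 1
  push_cast
  ring

end Stmt7Aux

open Stmt7Aux in
theorem stmt_7 (x τ : ℂ) (hτ : 0 < τ.im) :
    theta x τ * thetaChar 0 (1/3) x τ =
      thetaChar 0 (1/3) (2 * x) (2 * τ) * thetaChar 0 (-(1/3)) 0 (2 * τ)
        + thetaChar (1/2) (1/3) (2 * x) (2 * τ) * thetaChar (1/2) (-(1/3)) 0 (2 * τ) := by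
  have h2τ : 0 < (2 * τ).im := by simp [hτ]
  -- norm-summability of all the series involved
  have n1 := summable_norm_T 0 0 x hτ
  have n2 := summable_norm_T 0 (1/3) x hτ
  have n3 := summable_norm_T 0 (1/3) (2 * x) h2τ
  have n4 := summable_norm_T 0 (-(1/3)) 0 h2τ
  have n5 := summable_norm_T (1/2) (1/3) (2 * x) h2τ
  have n6 := summable_norm_T (1/2) (-(1/3)) 0 h2τ
  set H : ℤ × ℤ → ℂ := fun mn => T 0 0 x τ mn.1 * T 0 (1/3) x τ mn.2 with hH
  have hHs : Summable H := summable_mul_of_summable_norm n1 n2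
  set s : Set (ℤ × ℤ) := {mn : ℤ × ℤ | (mn.1 + mn.2) % 2 = 0} with hs
  -- LHS as a double sum
  rw [theta_eq, thetaChar_eq, thetaChar_eq, thetaChar_eq, thetaChar_eq, thetaChar_eq,
    tsum_mul_tsum_of_summable_norm n1 n2]
  have split := Summable.tsum_add_tsum_compl (f := H) (s := s) (hHs.subtype s) (hHs.subtype sᶜ)
  rw [show ∑' (z : ℤ × ℤ), T 0 0 x τ z.1 * T 0 (1/3) x τ z.2 = ∑' mn, H mn from rfl, ← split]
  congr 1
  · calc ∑' (mn : s), H mn = ∑' pq : ℤ × ℤ, H (e₀ pq) := (e₀.tsum_eq fun mn : s => H mn).symm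
      _ = ∑' pq : ℤ × ℤ, T 0 (1/3) (2 * x) (2 * τ) pq.1 * T 0 (-(1/3)) 0 (2 * τ) pq.2 :=
        tsum_congr fun ⟨p, q⟩ => key0 x τ p q
      _ = _ := (tsum_mul_tsum_of_summable_norm n3 n4).symm
  · calc ∑' (mn : ↥sᶜ), H mn = ∑' pq : ℤ × ℤ, H (e₁ pq) := (e₁.tsum_eq fun mn : ↥sᶜ => H mn).symm
      _ = ∑' pq : ℤ × ℤ, T (1/2) (1/3) (2 * x) (2 * τ) pq.1 * T (1/2) (-(1/3)) 0 (2 * τ) pq.2 :=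
        tsum_congr fun ⟨p, q⟩ => key1 x τ p q
      _ = _ := (tsum_mul_tsum_of_summable_norm n5 n6).symm
end

section
/- For all x ∈ ℂ and τ ∈ ℂ with Im τ > 0, one has θ(x, τ)·θ_{0,−1/3}(x, τ) = θ_{0,−1/3}(2x, 2τ)·θ_{0,1/3}(0, 2τ) + θ_{1/2,−1/3}(2x, 2τ)·θ_{1/2,1/3}(0, 2τ). -/
open Complex

/-- The general term of `thetaChar`. -/
noncomputable def Tc (a b : ℝ) (x τ : ℂ) (m : ℤ) : ℂ :=
  Complex.exp (Real.pi * Complex.I * τ * ((m : ℂ) + (a : ℂ)) ^ 2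
    + 2 * Real.pi * Complex.I * ((m : ℂ) + (a : ℂ)) * (x + (b : ℂ)))

lemma thetaChar_eq_tsum_Tc (a b : ℝ) (x τ : ℂ) :
    thetaChar a b x τ = ∑' m : ℤ, Tc a b x τ m := rfl

lemma theta_eq_tsum_Tc (x τ : ℂ) : theta x τ = ∑' m : ℤ, Tc 0 0 x τ m := by
  refine tsum_congr fun m => ?_
  simp [theta, Tc]

lemma Tc_eq_jacobi (a b : ℝ) (x τ : ℂ) (m : ℤ) :
    Tc a b x τ m = Complex.exp (Real.pi * Complex.I * τ * (a : ℂ) ^ 2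
      + 2 * Real.pi * Complex.I * (a : ℂ) * (x + (b : ℂ))) *
      jacobiTheta₂_term m (x + (b : ℂ) + (a : ℂ) * τ) τ := by
  rw [Tc, jacobiTheta₂_term, ← Complex.exp_add]
  congr 1
  ring

lemma summable_norm_Tc (a b : ℝ) (x τ : ℂ) (hτ : 0 < τ.im) :
    Summable fun m : ℤ => ‖Tc a b x τ m‖ := by
  have h : Summable (jacobiTheta₂_term · (x + (b : ℂ) + (a : ℂ) * τ) τ) :=
    (summable_jacobiTheta₂_term_iff _ _).mpr hτ
  have h2 : Summable fun m : ℤ =>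
      ‖jacobiTheta₂_term m (x + (b : ℂ) + (a : ℂ) * τ) τ‖ :=
    summable_norm_iff.mpr h
  simp_rw [Tc_eq_jacobi, norm_mul]
  exact h2.mul_left _

/-- The even-diagonal term identity. -/
lemma Tc_even (b : ℝ) (x τ : ℂ) (k l : ℤ) :
    Tc 0 0 x τ (k + l) * Tc 0 b x τ (k - l)
      = Tc 0 b (2 * x) (2 * τ) k * Tc 0 (-b) 0 (2 * τ) l := by
  simp only [Tc, ← Complex.exp_add]
  congr 1
  push_cast
  ring

/-- The odd-diagonal term identity. -/
lemma Tc_odd (b : ℝ) (x τ : ℂ) (k l : ℤ) :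
    Tc 0 0 x τ (k + l + 1) * Tc 0 b x τ (k - l)
      = Tc (1/2) b (2 * x) (2 * τ) k * Tc (1/2) (-b) 0 (2 * τ) l := by
  simp only [Tc, ← Complex.exp_add]
  congr 1
  push_cast
  ring

def Sev : Set (ℤ × ℤ) := {p | (p.1 + p.2) % 2 = 0}

def evenEquiv : (ℤ × ℤ) ≃ Sev where
  toFun kl := ⟨(kl.1 + kl.2, kl.1 - kl.2), by simp [Sev]; omega⟩
  invFun p := ((p.1.1 + p.1.2) / 2, (p.1.1 - p.1.2) / 2)
  left_inv kl := by
    obtain ⟨k, l⟩ := kl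
    simp only [Prod.mk.injEq]
    constructor <;> omega
  right_inv p := by
    obtain ⟨⟨m, n⟩, hp⟩ := p
    simp only [Sev, Set.mem_setOf_eq] at hp
    ext <;> simp <;> omega

def oddEquiv : (ℤ × ℤ) ≃ ↥(Sevᶜ) where
  toFun kl := ⟨(kl.1 + kl.2 + 1, kl.1 - kl.2), by simp [Sev]; omega⟩
  invFun p := ((p.1.1 + p.1.2 - 1) / 2, (p.1.1 - p.1.2 - 1) / 2)
  left_inv kl := by
    obtain ⟨k, l⟩ := kl
    simp only [Prod.mk.injEq]
    constructor <;> omega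
  right_inv p := by
    obtain ⟨⟨m, n⟩, hp⟩ := p
    simp only [Sev, Set.mem_compl_iff, Set.mem_setOf_eq] at hp
    ext <;> simp <;> omega

theorem stmt_8 (x τ : ℂ) (hτ : 0 < τ.im) :
    theta x τ * thetaChar 0 (-(1/3)) x τ =
      thetaChar 0 (-(1/3)) (2 * x) (2 * τ) * thetaChar 0 (1/3) 0 (2 * τ)
        + thetaChar (1/2) (-(1/3)) (2 * x) (2 * τ) * thetaChar (1/2) (1/3) 0 (2 * τ) := by
  have h2τ : 0 < (2 * τ).im := by
    simp only [Complex.mul_im]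
    simp
    linarith
  have S1 := summable_norm_Tc 0 0 x τ hτ
  have S2 := summable_norm_Tc 0 (-(1/3)) x τ hτ
  have S3 := summable_norm_Tc 0 (-(1/3)) (2 * x) (2 * τ) h2τ
  have S4 := summable_norm_Tc 0 (1/3) 0 (2 * τ) h2τ
  have S5 := summable_norm_Tc (1/2) (-(1/3)) (2 * x) (2 * τ) h2τ
  have S6 := summable_norm_Tc (1/2) (1/3) 0 (2 * τ) h2τ
  set F : ℤ × ℤ → ℂ := fun p => Tc 0 0 x τ p.1 * Tc 0 (-(1/3)) x τ p.2 with hF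
  have hFnorm : Summable fun p : ℤ × ℤ => ‖F p‖ := S1.mul_norm S2
  have hFs : Summable F := hFnorm.of_norm
  have hL : theta x τ * thetaChar 0 (-(1/3)) x τ = ∑' p : ℤ × ℤ, F p := by
    rw [theta_eq_tsum_Tc, thetaChar_eq_tsum_Tc]
    exact tsum_mul_tsum_of_summable_norm S1 S2
  have hsplit : ∑' p : ℤ × ℤ, F p = (∑' p : Sev, F p) + ∑' p : ↥(Sevᶜ), F p :=
    (Summable.tsum_add_tsum_compl (hFs.subtype Sev) (hFs.subtype Sevᶜ)).symm
  have hEven : (∑' p : Sev, F p)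
      = thetaChar 0 (-(1/3)) (2 * x) (2 * τ) * thetaChar 0 (1/3) 0 (2 * τ) := by
    rw [← Equiv.tsum_eq evenEquiv (fun p : Sev => F p)]
    have : ∀ kl : ℤ × ℤ, F (evenEquiv kl : ℤ × ℤ)
        = Tc 0 (-(1/3)) (2 * x) (2 * τ) kl.1 * Tc 0 (1/3) 0 (2 * τ) kl.2 := by
      rintro ⟨k, l⟩
      have h := Tc_even (-(1/3)) x τ k l
      norm_num at h
      simpa [evenEquiv, hF] using h
    rw [tsum_congr this, thetaChar_eq_tsum_Tc, thetaChar_eq_tsum_Tc]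
    exact (tsum_mul_tsum_of_summable_norm S3 S4).symm
  have hOdd : (∑' p : ↥(Sevᶜ), F p)
      = thetaChar (1/2) (-(1/3)) (2 * x) (2 * τ) * thetaChar (1/2) (1/3) 0 (2 * τ) := by
    rw [← Equiv.tsum_eq oddEquiv (fun p : ↥(Sevᶜ) => F p)]
    have : ∀ kl : ℤ × ℤ, F (oddEquiv kl : ℤ × ℤ)
        = Tc (1/2) (-(1/3)) (2 * x) (2 * τ) kl.1 * Tc (1/2) (1/3) 0 (2 * τ) kl.2 := by
      rintro ⟨k, l⟩
      have h := Tc_odd (-(1/3)) x τ k l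
      norm_num at h
      simpa [oddEquiv, hF] using h
    rw [tsum_congr this, thetaChar_eq_tsum_Tc, thetaChar_eq_tsum_Tc]
    exact (tsum_mul_tsum_of_summable_norm S5 S6).symm
  rw [hL, hsplit, hEven, hOdd]
end

section
/- For all x ∈ ℂ and τ ∈ ℂ with Im τ > 0, one has θ(x, τ)² − θ_{1/2,0}(x, τ)² = θ(x/2, τ/4)·θ_{0,1/2}(x/2, τ/4). -/
open Complex

/- Auxiliary material -/

private lemma summable_norm_jt (z τ : ℂ) (hτ : 0 < τ.im) :
    Summable fun n : ℤ => ‖jacobiTheta₂_term n z τ‖ := by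
  refine Summable.of_nonneg_of_le (fun _ => norm_nonneg _) (fun n => ?_)
    (summable_pow_mul_jacobiTheta₂_term_bound |z.im| hτ 0)
  simpa using norm_jacobiTheta₂_term_le hτ le_rfl le_rfl n

private lemma exp2pi (k : ℤ) (b : ℂ) :
    Complex.exp (b + (k : ℂ) * (2 * Real.pi * Complex.I)) = Complex.exp b := by
  rw [Complex.exp_add, Complex.exp_int_mul_two_pi_mul_I, mul_one]

/-- map onto the even-parity sublattice -/
private def s1 : ℤ × ℤ → ℤ × ℤ := fun p => (p.1 + p.2, p.1 - p.2)

/-- map onto the odd-parity sublattice -/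
private def s2 : ℤ × ℤ → ℤ × ℤ := fun p => (p.1 + p.2 + 1, p.1 - p.2)

private lemma s1_inj : Function.Injective s1 := by
  intro a b h
  simp only [s1, Prod.ext_iff] at h ⊢
  omega

private lemma s2_inj : Function.Injective s2 := by
  intro a b h
  simp only [s2, Prod.ext_iff] at h ⊢
  omega

private lemma range_s1 : Set.range s1 = {p : ℤ × ℤ | (p.1 + p.2) % 2 = 0} := by
  ext p
  constructor
  · rintro ⟨⟨u, v⟩, rfl⟩
    simp only [s1, Set.mem_setOf_eq]
    omega
  · intro hp
    simp only [Set.mem_setOf_eq] at hp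
    exact ⟨((p.1 + p.2) / 2, (p.1 - p.2) / 2), by simp only [s1, Prod.ext_iff]; omega⟩

private lemma range_s2 : Set.range s2 = {p : ℤ × ℤ | (p.1 + p.2) % 2 = 0}ᶜ := by
  ext p
  constructor
  · rintro ⟨⟨u, v⟩, rfl⟩
    simp only [s2, Set.mem_compl_iff, Set.mem_setOf_eq]
    omega
  · intro hp
    simp only [Set.mem_compl_iff, Set.mem_setOf_eq] at hp
    exact ⟨((p.1 + p.2 - 1) / 2, (p.1 - p.2 - 1) / 2), by simp only [s2, Prod.ext_iff]; omega⟩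


private noncomputable def fT (x τ : ℂ) (m : ℤ) : ℂ := jacobiTheta₂_term m x τ
private noncomputable def gT (x τ : ℂ) (m : ℤ) : ℂ :=
  Complex.exp (Real.pi * Complex.I * τ * ((m : ℂ) + 1/2) ^ 2
    + 2 * Real.pi * Complex.I * ((m : ℂ) + 1/2) * x)
private noncomputable def fT' (x τ : ℂ) (m : ℤ) : ℂ := jacobiTheta₂_term m (x / 2) (τ / 4)
private noncomputable def gT' (x τ : ℂ) (m : ℤ) : ℂ := jacobiTheta₂_term m (x / 2 + 1/2) (τ / 4)
private noncomputable def FT (x τ : ℂ) (p : ℤ × ℤ) : ℂ :=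
  Complex.exp (Real.pi * Complex.I * τ / 2 * ((p.1 : ℂ) ^ 2 + (p.2 : ℂ) ^ 2)
    + 2 * Real.pi * Complex.I * (p.1 : ℂ) * x
    + Real.pi * Complex.I * ((p.1 : ℂ) + (p.2 : ℂ)))
private noncomputable def GT (x τ : ℂ) (p : ℤ × ℤ) : ℂ := fT' x τ p.1 * gT' x τ p.2

private def invo : ℤ × ℤ ≃ ℤ × ℤ where
  toFun p := (p.1, -p.2 - 1)
  invFun p := (p.1, -p.2 - 1)
  left_inv p := by simp [Prod.ext_iff]
  right_inv p := by simp [Prod.ext_iff]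

private lemma hasSum_s1_s2 {f : ℤ × ℤ → ℂ} {a b : ℂ}
    (h1 : HasSum (f ∘ s1) a) (h2 : HasSum (f ∘ s2) b) : HasSum f (a + b) := by
  have hc : IsCompl (Set.range s1) (Set.range s2) := by
    rw [range_s1, range_s2]; exact isCompl_compl
  exact HasSum.add_isCompl hc (s1_inj.hasSum_range_iff.mpr h1) (s2_inj.hasSum_range_iff.mpr h2)

theorem stmt_10 (x τ : ℂ) (hτ : 0 < τ.im) :
    theta x τ ^ 2 - thetaChar (1/2) 0 x τ ^ 2 =
      theta (x / 2) (τ / 4) * thetaChar 0 (1/2) (x / 2) (τ / 4) := by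
  have hτ4 : 0 < (τ / 4).im := by
    simp only [Complex.div_im]
    norm_num
    positivity
  -- summability in norm
  have hfs : Summable fun m : ℤ => ‖fT x τ m‖ := summable_norm_jt x τ hτ
  have hg_eq : ∀ m : ℤ, gT x τ m = Complex.exp (Real.pi * Complex.I * τ / 4
      + Real.pi * Complex.I * x) * jacobiTheta₂_term m (x + τ / 2) τ := by
    intro m
    rw [gT, jacobiTheta₂_term, ← Complex.exp_add]
    congr 1
    push_cast
    ring
  have hgs : Summable fun m : ℤ => ‖gT x τ m‖ := by
    simp only [hg_eq, norm_mul]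
    exact (summable_norm_jt (x + τ / 2) τ hτ).mul_left _
  have hf's : Summable fun m : ℤ => ‖fT' x τ m‖ := summable_norm_jt (x / 2) (τ / 4) hτ4
  have hg's : Summable fun m : ℤ => ‖gT' x τ m‖ := summable_norm_jt (x / 2 + 1/2) (τ / 4) hτ4
  -- identification of the theta functions with these series
  have hθ : theta x τ = ∑' m : ℤ, fT x τ m := by
    refine tsum_congr fun m => ?_
    rw [fT, jacobiTheta₂_term]
    congr 1
    ring
  have hθc : thetaChar (1/2) 0 x τ = ∑' m : ℤ, gT x τ m := by
    refine tsum_congr fun m => ?_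
    rw [gT]
    congr 1
    push_cast
    ring
  have hθ' : theta (x / 2) (τ / 4) = ∑' m : ℤ, fT' x τ m := by
    refine tsum_congr fun m => ?_
    rw [fT', jacobiTheta₂_term]
    congr 1
    ring
  have hθc' : thetaChar 0 (1/2) (x / 2) (τ / 4) = ∑' m : ℤ, gT' x τ m := by
    refine tsum_congr fun m => ?_
    rw [gT', jacobiTheta₂_term]
    congr 1
    push_cast
    ring
  -- product has-sums
  have hP1 : HasSum (fun p : ℤ × ℤ => fT x τ p.1 * fT x τ p.2) (theta x τ ^ 2) := by
    have hs := summable_mul_of_summable_norm hfs hfs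
    have hv : ∑' p : ℤ × ℤ, fT x τ p.1 * fT x τ p.2 = theta x τ ^ 2 := by
      rw [sq, hθ, tsum_mul_tsum_of_summable_norm hfs hfs]
    exact hv ▸ hs.hasSum
  have hP2 : HasSum (fun p : ℤ × ℤ => gT x τ p.1 * gT x τ p.2) (thetaChar (1/2) 0 x τ ^ 2) := by
    have hs := summable_mul_of_summable_norm hgs hgs
    have hv : ∑' p : ℤ × ℤ, gT x τ p.1 * gT x τ p.2 = thetaChar (1/2) 0 x τ ^ 2 := by
      rw [sq, hθc, tsum_mul_tsum_of_summable_norm hgs hgs]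
    exact hv ▸ hs.hasSum
  have hGsummable : Summable (GT x τ) := summable_mul_of_summable_norm hf's hg's
  have hPG : HasSum (GT x τ) (theta (x / 2) (τ / 4) * thetaChar 0 (1/2) (x / 2) (τ / 4)) := by
    have hv : ∑' p : ℤ × ℤ, GT x τ p
        = theta (x / 2) (τ / 4) * thetaChar 0 (1/2) (x / 2) (τ / 4) := by
      rw [hθ', hθc', tsum_mul_tsum_of_summable_norm hf's hg's]
      exact tsum_congr fun p => rfl
    exact hv ▸ hGsummable.hasSum
  -- pointwise identities
  have id1 : FT x τ ∘ s1 = fun p : ℤ × ℤ => fT x τ p.1 * fT x τ p.2 := by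
    funext p
    obtain ⟨u, v⟩ := p
    simp only [Function.comp_apply, s1, FT, fT, jacobiTheta₂_term, ← Complex.exp_add]
    have harg : Real.pi * Complex.I * τ / 2 * (((u + v : ℤ) : ℂ) ^ 2 + ((u - v : ℤ) : ℂ) ^ 2)
        + 2 * Real.pi * Complex.I * ((u + v : ℤ) : ℂ) * x
        + Real.pi * Complex.I * (((u + v : ℤ) : ℂ) + ((u - v : ℤ) : ℂ))
        = (2 * Real.pi * Complex.I * (u : ℂ) * x + Real.pi * Complex.I * (u : ℂ) ^ 2 * τ
          + (2 * Real.pi * Complex.I * (v : ℂ) * x + Real.pi * Complex.I * (v : ℂ) ^ 2 * τ))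
          + (u : ℂ) * (2 * Real.pi * Complex.I) := by
      push_cast
      ring
    rw [harg, exp2pi]
  have id2 : FT x τ ∘ s2 = fun p : ℤ × ℤ => -(gT x τ p.1 * gT x τ p.2) := by
    funext p
    obtain ⟨u, v⟩ := p
    simp only [Function.comp_apply, s2, FT, gT, ← Complex.exp_add]
    have harg : Real.pi * Complex.I * τ / 2 * (((u + v + 1 : ℤ) : ℂ) ^ 2 + ((u - v : ℤ) : ℂ) ^ 2)
        + 2 * Real.pi * Complex.I * ((u + v + 1 : ℤ) : ℂ) * x
        + Real.pi * Complex.I * (((u + v + 1 : ℤ) : ℂ) + ((u - v : ℤ) : ℂ))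
        = ((Real.pi * Complex.I * τ * ((u : ℂ) + 1/2) ^ 2
            + 2 * Real.pi * Complex.I * ((u : ℂ) + 1/2) * x
          + (Real.pi * Complex.I * τ * ((v : ℂ) + 1/2) ^ 2
            + 2 * Real.pi * Complex.I * ((v : ℂ) + 1/2) * x))
          + Real.pi * Complex.I) + (u : ℂ) * (2 * Real.pi * Complex.I) := by
      push_cast
      ring
    rw [harg, exp2pi, Complex.exp_add, Complex.exp_pi_mul_I, mul_neg_one]
  have id3 : GT x τ ∘ s1 = FT x τ := by
    funext p
    obtain ⟨u, v⟩ := p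
    simp only [Function.comp_apply, s1, GT, FT, fT', gT', jacobiTheta₂_term,
      ← Complex.exp_add]
    have harg : 2 * Real.pi * Complex.I * ((u + v : ℤ) : ℂ) * (x / 2)
        + Real.pi * Complex.I * ((u + v : ℤ) : ℂ) ^ 2 * (τ / 4)
        + (2 * Real.pi * Complex.I * ((u - v : ℤ) : ℂ) * (x / 2 + 1/2)
          + Real.pi * Complex.I * ((u - v : ℤ) : ℂ) ^ 2 * (τ / 4))
        = (Real.pi * Complex.I * τ / 2 * ((u : ℂ) ^ 2 + (v : ℂ) ^ 2)
            + 2 * Real.pi * Complex.I * (u : ℂ) * x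
            + Real.pi * Complex.I * ((u : ℂ) + (v : ℂ)))
          + (-v : ℂ) * (2 * Real.pi * Complex.I) := by
      push_cast
      ring
    rw [harg]
    rw [show (-v : ℂ) = ((-v : ℤ) : ℂ) by push_cast; ring, exp2pi]
  -- the odd part of G sums to zero
  have hH : Summable (GT x τ ∘ s2) := hGsummable.comp_injective s2_inj
  have hH0 : HasSum (GT x τ ∘ s2) 0 := by
    have hpt : ∀ p : ℤ × ℤ, (GT x τ ∘ s2) (invo p) = -(GT x τ ∘ s2) p := by
      rintro ⟨u, v⟩
      show GT x τ (s2 (u, -v - 1)) = -GT x τ (s2 (u, v))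
      simp only [s2, GT, fT', gT', jacobiTheta₂_term, ← Complex.exp_add]
      have harg : 2 * Real.pi * Complex.I * ((u + (-v - 1) + 1 : ℤ) : ℂ) * (x / 2)
          + Real.pi * Complex.I * ((u + (-v - 1) + 1 : ℤ) : ℂ) ^ 2 * (τ / 4)
          + (2 * Real.pi * Complex.I * ((u - (-v - 1) : ℤ) : ℂ) * (x / 2 + 1/2)
            + Real.pi * Complex.I * ((u - (-v - 1) : ℤ) : ℂ) ^ 2 * (τ / 4))
          = ((2 * Real.pi * Complex.I * ((u + v + 1 : ℤ) : ℂ) * (x / 2)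
              + Real.pi * Complex.I * ((u + v + 1 : ℤ) : ℂ) ^ 2 * (τ / 4)
            + (2 * Real.pi * Complex.I * ((u - v : ℤ) : ℂ) * (x / 2 + 1/2)
              + Real.pi * Complex.I * ((u - v : ℤ) : ℂ) ^ 2 * (τ / 4)))
            + Real.pi * Complex.I) + (v : ℂ) * (2 * Real.pi * Complex.I) := by
        push_cast
        ring
      rw [harg, exp2pi, Complex.exp_add, Complex.exp_pi_mul_I, mul_neg_one]
    have h1 : ∑' p, (GT x τ ∘ s2) (invo p) = ∑' p, (GT x τ ∘ s2) p := invo.tsum_eq (GT x τ ∘ s2)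
    have h2 : ∑' p, (GT x τ ∘ s2) (invo p) = -∑' p, (GT x τ ∘ s2) p := by
      calc ∑' p, (GT x τ ∘ s2) (invo p) = ∑' p, -(GT x τ ∘ s2) p := tsum_congr hpt
        _ = -∑' p, (GT x τ ∘ s2) p := tsum_neg
    have h0 : ∑' p, (GT x τ ∘ s2) p = 0 := by
      have hss : ∑' p, (GT x τ ∘ s2) p + ∑' p, (GT x τ ∘ s2) p = 0 := by
        nth_rewrite 1 [← h1]
        rw [h2]
        exact neg_add_cancel _
      exact add_self_eq_zero.mp hss
    exact h0 ▸ hH.hasSum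
  -- assemble
  have hF : HasSum (FT x τ) (theta x τ ^ 2 + -(thetaChar (1/2) 0 x τ ^ 2)) :=
    hasSum_s1_s2 (id1 ▸ hP1) (id2 ▸ hP2.neg)
  have hG2 : HasSum (GT x τ) ((theta x τ ^ 2 + -(thetaChar (1/2) 0 x τ ^ 2)) + 0) :=
    hasSum_s1_s2 (id3 ▸ hF) hH0
  have := hG2.unique hPG
  rw [sub_eq_add_neg]
  rw [← this]
  ring
end

section
/- For all x ∈ ℂ and τ ∈ ℂ with Im τ > 0, one has the fourth-order classical identity θ(x, τ)²·θ(0, τ)² = θ_{1/2,0}(x, τ)²·θ_{1/2,0}(0, τ)² + θ_{0,1/2}(x, τ)²·θ_{0,1/2}(0, τ)². -/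
open Complex

/-!
Writing `θ_a(z, τ) = θ_{a,0}(z, τ)`, expanding a product `θ_{c+d}(x, τ) θ_{c-d}(y, τ)` as a double
series over `(m, n) ∈ ℤ²` and substituting `m + n = 2s` or `2s + 1`, `m - n = 2t` gives the
addition formula
`θ_{c+d}(x, τ) θ_{c-d}(y, τ) = θ_c(x+y, 2τ) θ_d(x-y, 2τ) + θ_{c+1/2}(x+y, 2τ) θ_{d+1/2}(x-y, 2τ)`.
With `y = x` it expresses `θ(x)²`, `θ_{1/2,0}(x)²` and `θ_{0,1/2}(x)² = θ(x + 1/2)²` through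
`θ_0` and `θ_{1/2}` at `(2x, 2τ)` and `(0, 2τ)`, and the identity becomes a polynomial identity.
-/

open scoped Real

noncomputable def intProdParityEquiv : (ℤ × ℤ) ⊕ (ℤ × ℤ) ≃ ℤ × ℤ :=
  Equiv.ofBijective
    (Sum.elim (fun p => (p.1 + p.2, p.1 - p.2)) (fun p => (p.1 + p.2 + 1, p.1 - p.2))) <| by
    constructor
    · rintro (⟨a, b⟩ | ⟨a, b⟩) (⟨c, d⟩ | ⟨c, d⟩) h <;>
        simp only [Sum.elim_inl, Sum.elim_inr, Prod.mk.injEq, Sum.inl.injEq,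
          Sum.inr.injEq] at h ⊢ <;> omega
    · rintro ⟨m, n⟩
      rcases Int.even_or_odd (m + n) with ⟨s, hs⟩ | ⟨s, hs⟩
      · exact ⟨Sum.inl (s, m - s), by simp only [Sum.elim_inl, Prod.mk.injEq]; omega⟩
      · exact ⟨Sum.inr (s, m - s - 1), by simp only [Sum.elim_inr, Prod.mk.injEq]; omega⟩

theorem HasSum.of_parity_split {M : Type*} [AddCommMonoid M] [TopologicalSpace M]
    [ContinuousAdd M] {f : ℤ × ℤ → M} {a b : M}
    (heven : HasSum (fun p : ℤ × ℤ => f (p.1 + p.2, p.1 - p.2)) a)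
    (hodd : HasSum (fun p : ℤ × ℤ => f (p.1 + p.2 + 1, p.1 - p.2)) b) :
    HasSum f (a + b) :=
  intProdParityEquiv.hasSum_iff.mp (heven.sum hodd)

namespace Theta

noncomputable def summand (τ z w : ℂ) : ℂ :=
  cexp (π * I * τ * w ^ 2 + 2 * π * I * w * z)

-- `w² + w'² = ((w + w')² + (w - w')²) / 2` and
-- `w x + w' y = ((w + w') (x + y) + (w - w') (x - y)) / 2`.
theorem summand_mul_summand (τ x y w w' : ℂ) :
    summand τ x w * summand τ y w' =
      summand (2 * τ) (x + y) ((w + w') / 2) * summand (2 * τ) (x - y) ((w - w') / 2) := by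
  simp only [summand, ← Complex.exp_add]
  ring_nf

theorem summand_eq_mul_jacobiTheta₂_term (τ z : ℂ) (a : ℝ) (m : ℤ) :
    summand τ z (m + a) =
      cexp (π * I * τ * a ^ 2 + 2 * π * I * a * z) * jacobiTheta₂_term m (z + a * τ) τ := by
  rw [summand, jacobiTheta₂_term, ← Complex.exp_add]
  ring_nf

theorem thetaChar_eq_tsum (a : ℝ) (z τ : ℂ) :
    thetaChar a 0 z τ = ∑' m : ℤ, summand τ z (m + a) := by
  simp only [thetaChar, summand, Complex.ofReal_zero, add_zero]

theorem theta_eq_thetaChar (z τ : ℂ) : theta z τ = thetaChar 0 0 z τ := by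
  simp only [theta, thetaChar, Complex.ofReal_zero, add_zero]

theorem thetaChar_eq_thetaChar_zero (a b : ℝ) (z τ : ℂ) :
    thetaChar a b z τ = thetaChar a 0 (z + b) τ := by
  simp only [thetaChar, Complex.ofReal_zero, add_zero]

theorem thetaChar_one (z τ : ℂ) : thetaChar 1 0 z τ = thetaChar 0 0 z τ := by
  simp only [thetaChar_eq_tsum, Complex.ofReal_one, Complex.ofReal_zero, add_zero]
  exact_mod_cast (Equiv.addRight (1 : ℤ)).tsum_eq fun m : ℤ => summand τ z m

theorem thetaChar_add_one (a : ℝ) (z τ : ℂ) :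
    thetaChar a 0 (z + 1) τ = cexp (2 * π * I * a) * thetaChar a 0 z τ := by
  rw [thetaChar_eq_tsum, thetaChar_eq_tsum, ← tsum_mul_left]
  refine tsum_congr fun m => ?_
  have h : summand τ (z + 1) (m + a) = cexp (2 * π * I * a +
      (π * I * τ * (m + a) ^ 2 + 2 * π * I * (m + a) * z) + m * (2 * π * I)) := by
    rw [summand]; ring_nf
  rw [h, Complex.exp_periodic.int_mul m, Complex.exp_add, summand]

variable {τ : ℂ}

theorem summable_norm_summand (a : ℝ) (z : ℂ) (hτ : 0 < τ.im) :
    Summable fun m : ℤ => ‖summand τ z (m + a)‖ := by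
  simp only [summand_eq_mul_jacobiTheta₂_term, norm_mul]
  exact (summable_norm_iff.mpr
    ((summable_jacobiTheta₂_term_iff _ τ).mpr hτ)).mul_left _

theorem hasSum_thetaChar (a : ℝ) (z : ℂ) (hτ : 0 < τ.im) :
    HasSum (fun m : ℤ => summand τ z (m + a)) (thetaChar a 0 z τ) := by
  rw [thetaChar_eq_tsum]
  exact (summable_norm_iff.mp (summable_norm_summand a z hτ)).hasSum

theorem hasSum_thetaChar_mul_thetaChar (a b : ℝ) (x y : ℂ) (hτ : 0 < τ.im) :
    HasSum (fun p : ℤ × ℤ => summand τ x (p.1 + a) * summand τ y (p.2 + b))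
      (thetaChar a 0 x τ * thetaChar b 0 y τ) := by
  set f := fun m : ℤ => summand τ x (m + a)
  set g := fun m : ℤ => summand τ y (m + b)
  exact (hasSum_thetaChar a x hτ).mul (f := f) (g := g) (hasSum_thetaChar b y hτ) <|
    summable_mul_of_summable_norm (f := f) (g := g)
      (summable_norm_summand a x hτ) (summable_norm_summand b y hτ)

theorem thetaChar_mul_thetaChar (c d : ℝ) (x y : ℂ) (hτ : 0 < τ.im) :
    thetaChar (c + d) 0 x τ * thetaChar (c - d) 0 y τ =
      thetaChar c 0 (x + y) (2 * τ) * thetaChar d 0 (x - y) (2 * τ) +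
        thetaChar (c + 1/2) 0 (x + y) (2 * τ) * thetaChar (d + 1/2) 0 (x - y) (2 * τ) := by
  have h2τ : 0 < (2 * τ).im := by simpa using hτ
  refine (hasSum_thetaChar_mul_thetaChar _ _ x y hτ).unique <| .of_parity_split ?_ ?_
  · convert hasSum_thetaChar_mul_thetaChar c d (x + y) (x - y) h2τ using 2 with p
    rw [summand_mul_summand]
    congr 2 <;> push_cast <;> ring
  · convert hasSum_thetaChar_mul_thetaChar (c + 1/2) (d + 1/2) (x + y) (x - y) h2τ using 2 with p
    rw [summand_mul_summand]
    congr 2 <;> push_cast <;> ring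

theorem theta_sq (z : ℂ) (hτ : 0 < τ.im) :
    theta z τ ^ 2 =
      thetaChar 0 0 (2 * z) (2 * τ) * thetaChar 0 0 0 (2 * τ) +
        thetaChar (1/2) 0 (2 * z) (2 * τ) * thetaChar (1/2) 0 0 (2 * τ) := by
  simpa [theta_eq_thetaChar, sq, two_mul] using thetaChar_mul_thetaChar 0 0 z z hτ

theorem thetaChar_half_zero_sq (z : ℂ) (hτ : 0 < τ.im) :
    thetaChar (1/2) 0 z τ ^ 2 =
      thetaChar (1/2) 0 (2 * z) (2 * τ) * thetaChar 0 0 0 (2 * τ) +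
        thetaChar 0 0 (2 * z) (2 * τ) * thetaChar (1/2) 0 0 (2 * τ) := by
  have h := thetaChar_mul_thetaChar (1/2) 0 z z hτ
  rw [add_zero, sub_zero, add_halves, thetaChar_one, zero_add] at h
  simpa [sq, two_mul] using h

theorem thetaChar_zero_half_sq (z : ℂ) (hτ : 0 < τ.im) :
    thetaChar 0 (1/2) z τ ^ 2 =
      thetaChar 0 0 (2 * z) (2 * τ) * thetaChar 0 0 0 (2 * τ) -
        thetaChar (1/2) 0 (2 * z) (2 * τ) * thetaChar (1/2) 0 0 (2 * τ) := by
  have h := thetaChar_mul_thetaChar 0 0 (z + 1/2) (z + 1/2) hτ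
  have hexp : cexp (2 * π * I * ((1/2 : ℝ) : ℂ)) = -1 := by
    rw [← Complex.exp_pi_mul_I]; push_cast; ring_nf
  rw [add_add_add_comm, add_halves, thetaChar_add_one, thetaChar_add_one] at h
  simp only [zero_add, hexp] at h
  rw [thetaChar_eq_thetaChar_zero]
  push_cast
  simpa [sq, two_mul, sub_eq_add_neg] using h

end Theta

open Theta in
theorem stmt_13 (x τ : ℂ) (hτ : 0 < τ.im) :
    theta x τ ^ 2 * theta 0 τ ^ 2 =
      thetaChar (1/2) 0 x τ ^ 2 * thetaChar (1/2) 0 0 τ ^ 2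
        + thetaChar 0 (1/2) x τ ^ 2 * thetaChar 0 (1/2) 0 τ ^ 2 := by
  rw [theta_sq x hτ, theta_sq 0 hτ, thetaChar_half_zero_sq x hτ, thetaChar_half_zero_sq 0 hτ,
    thetaChar_zero_half_sq x hτ, thetaChar_zero_half_sq 0 hτ, mul_zero]
  ring
end

section
/- For all x ∈ ℂ and τ ∈ ℂ with Im τ > 0, one has the Landen-type transformation for n = 3: 2·θ(3x, 9τ)² − [θ_{1/3,0}(3x, 9τ) + θ_{−1/3,0}(3x, 9τ)]² = θ_{0,1/3}(2x, 2τ)·θ_{0,−1/3}(0, 2τ) + θ_{1/2,1/3}(2x, 2τ)·θ_{1/2,−1/3}(0, 2τ) + θ_{0,−1/3}(2x, 2τ)·θ_{0,1/3}(0, 2τ) + θ_{1/2,−1/3}(2x, 2τ)·θ_{1/2,1/3}(0, 2τ) − [θ_{1/6,0}(6x, 18τ)·θ_{−1/6,0}(0, 18τ) + θ_{2/3,0}(6x, 18τ)·θ_{1/3,0}(0, 18τ)] − [θ_{−1/6,0}(6x, 18τ)·θ_{1/6,0}(0, 18τ) + θ_{1/3,0}(6x, 18τ)·θ_{2/3,0}(0,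 18τ)]. -/
open Complex

noncomputable def Fterm (a : ℝ) (y τ : ℂ) (m : ℤ) : ℂ :=
  Complex.exp (Real.pi * Complex.I * τ * ((m : ℂ) + (a : ℂ)) ^ 2
    + 2 * Real.pi * Complex.I * ((m : ℂ) + (a : ℂ)) * y)

lemma Fterm_eq_jt (a : ℝ) (y τ : ℂ) (m : ℤ) :
    Fterm a y τ m = Complex.exp (Real.pi * Complex.I * τ * (a:ℂ)^2
      + 2 * Real.pi * Complex.I * (a:ℂ) * y) * jacobiTheta₂_term m (y + (a:ℂ) * τ) τ := by
  rw [Fterm, jacobiTheta₂_term, ← Complex.exp_add]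
  congr 1
  push_cast
  ring

lemma summable_norm_Fterm (a : ℝ) (y τ : ℂ) (hτ : 0 < τ.im) :
    Summable fun m : ℤ => ‖Fterm a y τ m‖ := by
  simp_rw [Fterm_eq_jt, norm_mul]
  apply Summable.mul_left
  apply (summable_pow_mul_jacobiTheta₂_term_bound |(y + (a:ℂ)*τ).im| hτ 0).of_nonneg_of_le
    (fun _ => norm_nonneg _)
  intro n
  simpa using norm_jacobiTheta₂_term_le hτ (le_refl |(y + (a:ℂ)*τ).im|) le_rfl n

lemma summable_Fterm (a : ℝ) (y τ : ℂ) (hτ : 0 < τ.im) :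
    Summable (Fterm a y τ) := (summable_norm_Fterm a y τ hτ).of_norm

def zEquiv3 : ℤ × Fin 3 ≃ ℤ where
  toFun p := 3 * p.1 + (p.2 : ℤ)
  invFun m := ((m - m % 3) / 3, ⟨(m % 3).toNat, by omega⟩)
  left_inv p := by
    obtain ⟨k, j⟩ := p
    have hj : (j : ℤ) < 3 := by exact_mod_cast j.2
    have hj0 : (0:ℤ) ≤ (j : ℤ) := by exact_mod_cast Nat.zero_le _
    have h1 : (3 * k + (j:ℤ)) % 3 = (j:ℤ) := by omega
    refine Prod.ext ?_ (Fin.ext ?_)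
    · simp only [h1]; omega
    · simp only [h1]; omega
  right_inv m := by simp only; omega

def zEquivPar : (ℤ × ℤ) × Bool ≃ ℤ × ℤ where
  toFun p := (p.1.1 + p.1.2 + (if p.2 then 1 else 0), p.1.1 - p.1.2)
  invFun q := if (q.1 + q.2) % 2 = 0 then (((q.1 + q.2) / 2, (q.1 - q.2) / 2), false)
    else (((q.1 + q.2 - 1) / 2, (q.1 - q.2 - 1) / 2), true)
  left_inv p := by
    obtain ⟨⟨m, n⟩, b⟩ := p
    cases b <;> simp only [if_true, if_false, Bool.false_eq_true] <;>
      split_ifs with h <;> simp_all [Prod.ext_iff] <;> omega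
  right_inv q := by
    obtain ⟨p, r⟩ := q
    simp only
    split_ifs with h <;> simp_all [Prod.ext_iff] <;> omega

@[simp] lemma zEquivPar_false (m n : ℤ) : zEquivPar ((m, n), false) = (m + n, m - n) := by
  simp [zEquivPar]

@[simp] lemma zEquivPar_true (m n : ℤ) : zEquivPar ((m, n), true) = (m + n + 1, m - n) := by
  simp [zEquivPar]

@[simp] lemma zEquiv3_apply (k : ℤ) (j : Fin 3) : zEquiv3 (k, j) = 3 * k + (j : ℤ) := rfl

lemma summable_comp_3 (g : ℤ → ℂ) (hg : Summable g) (c : ℤ) :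
    Summable fun k : ℤ => g (3 * k + c) :=
  hg.comp_injective (fun a b hab => by omega)

lemma tsum_int_three (g : ℤ → ℂ) (hg : Summable g) :
    ∑' m : ℤ, g m = (∑' k : ℤ, g (3 * k)) + (∑' k : ℤ, g (3 * k + 1))
      + ∑' k : ℤ, g (3 * k + 2) := by
  have h0 : Summable fun p : ℤ × Fin 3 => g (zEquiv3 p) := zEquiv3.summable_iff.2 hg
  rw [← zEquiv3.tsum_eq g, Summable.tsum_prod' h0 (fun k => .of_finite)]
  have hc : ∀ k : ℤ, (∑' j : Fin 3, g (zEquiv3 (k, j)))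
      = g (3 * k) + g (3 * k + 1) + g (3 * k + 2) := by
    intro k
    rw [tsum_fintype, Fin.sum_univ_three]
    norm_num
  have s0 : Summable fun k : ℤ => g (3 * k) :=
    (summable_comp_3 g hg 0).congr (fun k => by norm_num)
  rw [tsum_congr hc,
    Summable.tsum_add (s0.add (summable_comp_3 g hg 1)) (summable_comp_3 g hg 2),
    Summable.tsum_add s0 (summable_comp_3 g hg 1)]

lemma tsum_parity (f g : ℤ → ℂ) (hf : Summable fun m => ‖f m‖)
    (hg : Summable fun m => ‖g m‖) :
    (∑' m : ℤ, f m) * (∑' m : ℤ, g m)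
      = (∑' p : ℤ × ℤ, f (p.1 + p.2) * g (p.1 - p.2))
        + ∑' p : ℤ × ℤ, f (p.1 + p.2 + 1) * g (p.1 - p.2) := by
  have hfg : Summable fun q : ℤ × ℤ => f q.1 * g q.2 :=
    summable_mul_of_summable_norm hf hg
  have h0 : Summable fun p : (ℤ × ℤ) × Bool => f (zEquivPar p).1 * g (zEquivPar p).2 :=
    zEquivPar.summable_iff.2 hfg
  rw [tsum_mul_tsum_of_summable_norm hf hg,
    ← zEquivPar.tsum_eq (fun q : ℤ × ℤ => f q.1 * g q.2),
    Summable.tsum_prod' h0 (fun mn => .of_finite)]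
  have hc : ∀ mn : ℤ × ℤ, (∑' b : Bool, f (zEquivPar (mn, b)).1 * g (zEquivPar (mn, b)).2)
      = f (mn.1 + mn.2) * g (mn.1 - mn.2) + f (mn.1 + mn.2 + 1) * g (mn.1 - mn.2) := by
    intro ⟨m, n⟩
    rw [tsum_fintype]
    simp only [Fintype.sum_bool, zEquivPar_false, zEquivPar_true]
    ring
  have s0 : Summable fun mn : ℤ × ℤ => f (mn.1 + mn.2) * g (mn.1 - mn.2) := by
    apply hfg.comp_injective (i := fun mn : ℤ × ℤ => (mn.1 + mn.2, mn.1 - mn.2))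
    intro a b hab
    simp only [Prod.ext_iff] at hab ⊢
    omega
  have s1 : Summable fun mn : ℤ × ℤ => f (mn.1 + mn.2 + 1) * g (mn.1 - mn.2) := by
    apply hfg.comp_injective (i := fun mn : ℤ × ℤ => (mn.1 + mn.2 + 1, mn.1 - mn.2))
    intro a b hab
    simp only [Prod.ext_iff] at hab ⊢
    omega
  rw [tsum_congr hc, Summable.tsum_add s0 s1]

lemma thetaChar_eq (a b : ℝ) (x τ : ℂ) :
    thetaChar a b x τ = ∑' m : ℤ, Fterm a (x + (b : ℂ)) τ m := rfl

lemma thetaChar_eq0 (a : ℝ) (x τ : ℂ) :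
    thetaChar a 0 x τ = ∑' m : ℤ, Fterm a x τ m := by
  rw [thetaChar_eq]
  norm_num

lemma theta_eq (x τ : ℂ) : theta x τ = ∑' m : ℤ, Fterm 0 x τ m := by
  unfold theta Fterm
  exact tsum_congr fun m => by norm_num

lemma cexp_int_shift {w z : ℂ} (k : ℤ) (h : w = z + (k : ℂ) * (2 * (Real.pi : ℂ) * Complex.I)) :
    Complex.exp w = Complex.exp z := by
  rw [h, Complex.exp_add, Complex.exp_int_mul_two_pi_mul_I, mul_one]

lemma Fterm_shift {a a' : ℝ} {y y' τ₁ τ₂ : ℂ} {m m' : ℤ} (k : ℤ)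
    (h : (Real.pi : ℂ) * Complex.I * τ₁ * ((m : ℂ) + (a : ℂ)) ^ 2
        + 2 * (Real.pi : ℂ) * Complex.I * ((m : ℂ) + (a : ℂ)) * y
      = ((Real.pi : ℂ) * Complex.I * τ₂ * ((m' : ℂ) + (a' : ℂ)) ^ 2
        + 2 * (Real.pi : ℂ) * Complex.I * ((m' : ℂ) + (a' : ℂ)) * y')
        + (k : ℂ) * (2 * (Real.pi : ℂ) * Complex.I)) :
    Fterm a y τ₁ m = Fterm a' y' τ₂ m' := cexp_int_shift k h

lemma Fterm_shift_mul {a a' : ℝ} {y y' τ₁ τ₂ : ℂ} (w : ℂ) {m m' : ℤ} (k : ℤ)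
    (h : (Real.pi : ℂ) * Complex.I * τ₁ * ((m : ℂ) + (a : ℂ)) ^ 2
        + 2 * (Real.pi : ℂ) * Complex.I * ((m : ℂ) + (a : ℂ)) * y
      = ((Real.pi : ℂ) * Complex.I * τ₂ * ((m' : ℂ) + (a' : ℂ)) ^ 2
        + 2 * (Real.pi : ℂ) * Complex.I * ((m' : ℂ) + (a' : ℂ)) * y' + w)
        + (k : ℂ) * (2 * (Real.pi : ℂ) * Complex.I)) :
    Fterm a y τ₁ m = Fterm a' y' τ₂ m' * Complex.exp w := by
  unfold Fterm
  rw [← Complex.exp_add]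
  exact cexp_int_shift k h

lemma zeta_sum : Complex.exp (2 * (Real.pi : ℂ) * Complex.I / 3)
    + Complex.exp (-(2 * (Real.pi : ℂ) * Complex.I / 3)) = -1 := by
  have h : (2 * (Real.pi : ℂ) * Complex.I / 3) = ((2 * Real.pi / 3 : ℝ) : ℂ) * Complex.I := by
    push_cast
    ring
  have hc : Real.cos (2 * Real.pi / 3) = -(1 / 2) := by
    rw [show 2 * Real.pi / 3 = Real.pi - Real.pi / 3 by ring, Real.cos_pi_sub,
      Real.cos_pi_div_three]
  have h2 := Complex.ofReal_cos (2 * Real.pi / 3)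
  rw [Complex.cos, hc, show ((-(1/2) : ℝ) : ℂ) = -(1/2) by norm_num] at h2
  rw [h, ← neg_mul]
  linear_combination -2 * h2

lemma theta_decomp (x τ : ℂ) (hτ : 0 < τ.im) :
    (∑' m : ℤ, Fterm 0 x τ m) = (∑' k : ℤ, Fterm 0 (3 * x) (9 * τ) k)
      + (∑' k : ℤ, Fterm (1/3) (3 * x) (9 * τ) k)
      + ∑' k : ℤ, Fterm (-(1/3)) (3 * x) (9 * τ) k := by
  calc (∑' m : ℤ, Fterm 0 x τ m)
      = (∑' k : ℤ, Fterm 0 x τ (3 * k)) + (∑' k : ℤ, Fterm 0 x τ (3 * k + 1))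
        + ∑' k : ℤ, Fterm 0 x τ (3 * k + 2) := tsum_int_three _ (summable_Fterm 0 x τ hτ)
    _ = (∑' k : ℤ, Fterm 0 (3 * x) (9 * τ) k) + (∑' k : ℤ, Fterm (1/3) (3 * x) (9 * τ) k)
        + ∑' k : ℤ, Fterm (-(1/3)) (3 * x) (9 * τ) (k + 1) := by
        refine congrArg₂ _ (congrArg₂ _ ?_ ?_) ?_ <;>
          exact tsum_congr fun k => Fterm_shift 0 (by push_cast; ring)
    _ = (∑' k : ℤ, Fterm 0 (3 * x) (9 * τ) k) + (∑' k : ℤ, Fterm (1/3) (3 * x) (9 * τ) k)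
        + ∑' k : ℤ, Fterm (-(1/3)) (3 * x) (9 * τ) k := by
        refine congrArg _ ?_
        have h := (Equiv.addRight (1 : ℤ)).tsum_eq (Fterm (-(1/3)) (3 * x) (9 * τ))
        simpa only [Equiv.coe_addRight] using h

lemma W_decomp (x τ : ℂ) (hτ : 0 < τ.im) :
    (∑' m : ℤ, Fterm 0 (x + ((1/3 : ℝ) : ℂ)) τ m)
      + (∑' m : ℤ, Fterm 0 (x + ((-(1/3) : ℝ) : ℂ)) τ m)
    = 2 * (∑' k : ℤ, Fterm 0 (3 * x) (9 * τ) k)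
      - (∑' k : ℤ, Fterm (1/3) (3 * x) (9 * τ) k)
      - ∑' k : ℤ, Fterm (-(1/3)) (3 * x) (9 * τ) k := by
  have sp := summable_Fterm 0 (x + ((1/3 : ℝ) : ℂ)) τ hτ
  have sm := summable_Fterm 0 (x + ((-(1/3) : ℝ) : ℂ)) τ hτ
  calc (∑' m : ℤ, Fterm 0 (x + ((1/3 : ℝ) : ℂ)) τ m)
        + (∑' m : ℤ, Fterm 0 (x + ((-(1/3) : ℝ) : ℂ)) τ m)
      = ∑' m : ℤ, (Fterm 0 (x + ((1/3 : ℝ) : ℂ)) τ m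
          + Fterm 0 (x + ((-(1/3) : ℝ) : ℂ)) τ m) := (Summable.tsum_add sp sm).symm
    _ = (∑' k : ℤ, (Fterm 0 (x + ((1/3 : ℝ) : ℂ)) τ (3 * k)
          + Fterm 0 (x + ((-(1/3) : ℝ) : ℂ)) τ (3 * k)))
        + (∑' k : ℤ, (Fterm 0 (x + ((1/3 : ℝ) : ℂ)) τ (3 * k + 1)
          + Fterm 0 (x + ((-(1/3) : ℝ) : ℂ)) τ (3 * k + 1)))
        + ∑' k : ℤ, (Fterm 0 (x + ((1/3 : ℝ) : ℂ)) τ (3 * k + 2)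
          + Fterm 0 (x + ((-(1/3) : ℝ) : ℂ)) τ (3 * k + 2)) :=
        tsum_int_three _ (sp.add sm)
    _ = (∑' k : ℤ, 2 * Fterm 0 (3 * x) (9 * τ) k)
        + (∑' k : ℤ, -Fterm (1/3) (3 * x) (9 * τ) k)
        + ∑' k : ℤ, -Fterm (-(1/3)) (3 * x) (9 * τ) (k + 1) := by
        refine congrArg₂ _ (congrArg₂ _ ?_ ?_) ?_
        · exact tsum_congr fun k => by
            rw [show Fterm 0 (x + ((1/3 : ℝ) : ℂ)) τ (3 * k) = Fterm 0 (3 * x) (9 * τ) k from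
                  Fterm_shift k (by push_cast; ring),
                show Fterm 0 (x + ((-(1/3) : ℝ) : ℂ)) τ (3 * k) = Fterm 0 (3 * x) (9 * τ) k from
                  Fterm_shift (-k) (by push_cast; ring)]
            ring
        · exact tsum_congr fun k => by
            rw [show Fterm 0 (x + ((1/3 : ℝ) : ℂ)) τ (3 * k + 1)
                  = Fterm (1/3) (3 * x) (9 * τ) k
                    * Complex.exp (2 * (Real.pi : ℂ) * Complex.I / 3) from
                  Fterm_shift_mul _ k (by push_cast; ring),
                show Fterm 0 (x + ((-(1/3) : ℝ) : ℂ)) τ (3 * k + 1)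
                  = Fterm (1/3) (3 * x) (9 * τ) k
                    * Complex.exp (-(2 * (Real.pi : ℂ) * Complex.I / 3)) from
                  Fterm_shift_mul _ (-k) (by push_cast; ring),
                ← mul_add, zeta_sum]
            ring
        · exact tsum_congr fun k => by
            rw [show Fterm 0 (x + ((1/3 : ℝ) : ℂ)) τ (3 * k + 2)
                  = Fterm (-(1/3)) (3 * x) (9 * τ) (k + 1)
                    * Complex.exp (-(2 * (Real.pi : ℂ) * Complex.I / 3)) from
                  Fterm_shift_mul _ (k + 1) (by push_cast; ring),
                show Fterm 0 (x + ((-(1/3) : ℝ) : ℂ)) τ (3 * k + 2)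
                  = Fterm (-(1/3)) (3 * x) (9 * τ) (k + 1)
                    * Complex.exp (2 * (Real.pi : ℂ) * Complex.I / 3) from
                  Fterm_shift_mul _ (-(k + 1)) (by push_cast; ring),
                ← mul_add, add_comm (Complex.exp (-(2 * (Real.pi : ℂ) * Complex.I / 3))),
                zeta_sum]
            ring
    _ = 2 * (∑' k : ℤ, Fterm 0 (3 * x) (9 * τ) k)
        - (∑' k : ℤ, Fterm (1/3) (3 * x) (9 * τ) k)
        - ∑' k : ℤ, Fterm (-(1/3)) (3 * x) (9 * τ) k := by
        rw [tsum_mul_left, tsum_neg, tsum_neg]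
        have h := (Equiv.addRight (1 : ℤ)).tsum_eq (Fterm (-(1/3)) (3 * x) (9 * τ))
        simp only [Equiv.coe_addRight] at h
        rw [h]
        ring

lemma prodP (x τ : ℂ) (hτ : 0 < τ.im) :
    thetaChar 0 (1/3) (2 * x) (2 * τ) * thetaChar 0 (-(1/3)) 0 (2 * τ)
      + thetaChar (1/2) (1/3) (2 * x) (2 * τ) * thetaChar (1/2) (-(1/3)) 0 (2 * τ)
    = (∑' m : ℤ, Fterm 0 x τ m) * ∑' m : ℤ, Fterm 0 (x + ((1/3 : ℝ) : ℂ)) τ m := by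
  have h2 : 0 < (2 * τ).im := by simp [Complex.mul_im]; linarith
  rw [thetaChar_eq, thetaChar_eq, thetaChar_eq, thetaChar_eq,
    tsum_mul_tsum_of_summable_norm (summable_norm_Fterm _ _ _ h2) (summable_norm_Fterm _ _ _ h2),
    tsum_mul_tsum_of_summable_norm (summable_norm_Fterm _ _ _ h2) (summable_norm_Fterm _ _ _ h2),
    tsum_parity (Fterm 0 x τ) (Fterm 0 (x + ((1/3 : ℝ) : ℂ)) τ)
      (summable_norm_Fterm _ _ _ hτ) (summable_norm_Fterm _ _ _ hτ)]
  refine congrArg₂ _ ?_ ?_ <;>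
    exact tsum_congr fun p => by
      unfold Fterm
      rw [← Complex.exp_add, ← Complex.exp_add]
      congr 1
      push_cast
      ring

lemma prodM (x τ : ℂ) (hτ : 0 < τ.im) :
    thetaChar 0 (-(1/3)) (2 * x) (2 * τ) * thetaChar 0 (1/3) 0 (2 * τ)
      + thetaChar (1/2) (-(1/3)) (2 * x) (2 * τ) * thetaChar (1/2) (1/3) 0 (2 * τ)
    = (∑' m : ℤ, Fterm 0 x τ m) * ∑' m : ℤ, Fterm 0 (x + ((-(1/3) : ℝ) : ℂ)) τ m := by
  have h2 : 0 < (2 * τ).im := by simp [Complex.mul_im]; linarith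
  rw [thetaChar_eq, thetaChar_eq, thetaChar_eq, thetaChar_eq,
    tsum_mul_tsum_of_summable_norm (summable_norm_Fterm _ _ _ h2) (summable_norm_Fterm _ _ _ h2),
    tsum_mul_tsum_of_summable_norm (summable_norm_Fterm _ _ _ h2) (summable_norm_Fterm _ _ _ h2),
    tsum_parity (Fterm 0 x τ) (Fterm 0 (x + ((-(1/3) : ℝ) : ℂ)) τ)
      (summable_norm_Fterm _ _ _ hτ) (summable_norm_Fterm _ _ _ hτ)]
  refine congrArg₂ _ ?_ ?_ <;>
    exact tsum_congr fun p => by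
      unfold Fterm
      rw [← Complex.exp_add, ← Complex.exp_add]
      congr 1
      push_cast
      ring

lemma prodG1 (x τ : ℂ) (hτ : 0 < τ.im) :
    thetaChar (1/6) 0 (6 * x) (18 * τ) * thetaChar (-(1/6)) 0 0 (18 * τ)
      + thetaChar (2/3) 0 (6 * x) (18 * τ) * thetaChar (1/3) 0 0 (18 * τ)
    = (∑' m : ℤ, Fterm 0 (3 * x) (9 * τ) m) * ∑' m : ℤ, Fterm (1/3) (3 * x) (9 * τ) m := by
  have h18 : 0 < (18 * τ).im := by simp [Complex.mul_im]; linarith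
  have h9 : 0 < (9 * τ).im := by simp [Complex.mul_im]; linarith
  rw [thetaChar_eq0, thetaChar_eq0, thetaChar_eq0, thetaChar_eq0,
    tsum_mul_tsum_of_summable_norm (summable_norm_Fterm _ _ _ h18) (summable_norm_Fterm _ _ _ h18),
    tsum_mul_tsum_of_summable_norm (summable_norm_Fterm _ _ _ h18) (summable_norm_Fterm _ _ _ h18),
    tsum_parity (Fterm 0 (3 * x) (9 * τ)) (Fterm (1/3) (3 * x) (9 * τ))
      (summable_norm_Fterm _ _ _ h9) (summable_norm_Fterm _ _ _ h9)]
  refine congrArg₂ _ ?_ ?_ <;>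
    exact tsum_congr fun p => by
      unfold Fterm
      rw [← Complex.exp_add, ← Complex.exp_add]
      congr 1
      push_cast
      ring

lemma prodG2 (x τ : ℂ) (hτ : 0 < τ.im) :
    thetaChar (-(1/6)) 0 (6 * x) (18 * τ) * thetaChar (1/6) 0 0 (18 * τ)
      + thetaChar (1/3) 0 (6 * x) (18 * τ) * thetaChar (2/3) 0 0 (18 * τ)
    = (∑' m : ℤ, Fterm 0 (3 * x) (9 * τ) m) * ∑' m : ℤ, Fterm (-(1/3)) (3 * x) (9 * τ) m := by
  have h18 : 0 < (18 * τ).im := by simp [Complex.mul_im]; linarith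
  have h9 : 0 < (9 * τ).im := by simp [Complex.mul_im]; linarith
  rw [thetaChar_eq0, thetaChar_eq0, thetaChar_eq0, thetaChar_eq0,
    tsum_mul_tsum_of_summable_norm (summable_norm_Fterm _ _ _ h18) (summable_norm_Fterm _ _ _ h18),
    tsum_mul_tsum_of_summable_norm (summable_norm_Fterm _ _ _ h18) (summable_norm_Fterm _ _ _ h18),
    tsum_parity (Fterm 0 (3 * x) (9 * τ)) (Fterm (-(1/3)) (3 * x) (9 * τ))
      (summable_norm_Fterm _ _ _ h9) (summable_norm_Fterm _ _ _ h9)]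
  refine congrArg₂ _ ?_ ?_ <;>
    exact tsum_congr fun p => by
      unfold Fterm
      rw [← Complex.exp_add, ← Complex.exp_add]
      congr 1
      push_cast
      ring

theorem stmt_15 (x τ : ℂ) (hτ : 0 < τ.im) :
    2 * theta (3 * x) (9 * τ) ^ 2
      - (thetaChar (1/3) 0 (3 * x) (9 * τ) + thetaChar (-(1/3)) 0 (3 * x) (9 * τ)) ^ 2 =
      thetaChar 0 (1/3) (2 * x) (2 * τ) * thetaChar 0 (-(1/3)) 0 (2 * τ)
        + thetaChar (1/2) (1/3) (2 * x) (2 * τ) * thetaChar (1/2) (-(1/3)) 0 (2 * τ)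
        + thetaChar 0 (-(1/3)) (2 * x) (2 * τ) * thetaChar 0 (1/3) 0 (2 * τ)
        + thetaChar (1/2) (-(1/3)) (2 * x) (2 * τ) * thetaChar (1/2) (1/3) 0 (2 * τ)
        - (thetaChar (1/6) 0 (6 * x) (18 * τ) * thetaChar (-(1/6)) 0 0 (18 * τ)
            + thetaChar (2/3) 0 (6 * x) (18 * τ) * thetaChar (1/3) 0 0 (18 * τ))
        - (thetaChar (-(1/6)) 0 (6 * x) (18 * τ) * thetaChar (1/6) 0 0 (18 * τ)
            + thetaChar (1/3) 0 (6 * x) (18 * τ) * thetaChar (2/3) 0 0 (18 * τ)) := by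
  have hTh : theta (3 * x) (9 * τ) = ∑' k : ℤ, Fterm 0 (3 * x) (9 * τ) k := theta_eq _ _
  have hb1 := thetaChar_eq0 (1/3) (3 * x) (9 * τ)
  have hb2 := thetaChar_eq0 (-(1/3)) (3 * x) (9 * τ)
  have hdec := theta_decomp x τ hτ
  have hw := W_decomp x τ hτ
  have p1 := prodP x τ hτ
  have p2 := prodM x τ hτ
  have p3 := prodG1 x τ hτ
  have p4 := prodG2 x τ hτ
  linear_combination
    2 * (theta (3 * x) (9 * τ) + (∑' k : ℤ, Fterm 0 (3 * x) (9 * τ) k)) * hTh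
    - (thetaChar (1/3) 0 (3 * x) (9 * τ) + thetaChar (-(1/3)) 0 (3 * x) (9 * τ)
        + (∑' k : ℤ, Fterm (1/3) (3 * x) (9 * τ) k)
        + (∑' k : ℤ, Fterm (-(1/3)) (3 * x) (9 * τ) k)) * (hb1 + hb2)
    - p1 - p2 + p3 + p4
    - ((∑' m : ℤ, Fterm 0 (x + ((1/3 : ℝ) : ℂ)) τ m)
        + (∑' m : ℤ, Fterm 0 (x + ((-(1/3) : ℝ) : ℂ)) τ m)) * hdec
    - ((∑' k : ℤ, Fterm 0 (3 * x) (9 * τ) k) + (∑' k : ℤ, Fterm (1/3) (3 * x) (9 * τ) k)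
        + (∑' k : ℤ, Fterm (-(1/3)) (3 * x) (9 * τ) k)) * hw
end

section
/- For all q ∈ ℂ with |q| < 1, one has ∑_{m∈ℤ} q^{m²} = ∏_{m=0}^{∞} (1 − q^{8m+8}) · [ (∏_{m=0}^{∞} (1 + q^{8m+4}))² + 2q·(∏_{m=0}^{∞} (1 + q^{8m+8}))² ]. -/
/-!
Both summands come from Jacobi's triple product
`∑ₖ q^(k²) zᵏ = ∏ₙ (1 - q^(2n+2)) (1 + z q^(2n+1)) (1 + z⁻¹ q^(2n+1))`,
applied with `q⁴` in place of `q` to the even terms `m = 2k` (at `z = 1`) and to the odd terms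
`m = 2k + 1` (at `z = q⁴`).

The triple product is the limit `N → ∞` of its finite form: in
`∏_{j<N} (1 + z q^(2j+1)) (1 + z⁻¹ q^(2j+1))` the coefficient of `q^(k²) zᵏ` is the Gaussian
binomial coefficient `[2N, N+k]` in base `q²`, as the `q`-Pascal recurrence shows by induction
on `N`. These coefficients are bounded uniformly in `N` and `k` and tend to `1 / (q²; q²)_∞`,
so Tannery's theorem passes to the limit.
-/

open Filter Topology Finset

theorem HasSum.int_even_add_odd {M : Type*} [AddCommMonoid M] [TopologicalSpace M]
    [ContinuousAdd M] {f : ℤ → M} {a b : M} (he : HasSum (fun k ↦ f (2 * k)) a)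
    (ho : HasSum (fun k ↦ f (2 * k + 1)) b) : HasSum f (a + b) := by
  have hinj := mul_right_injective₀ (two_ne_zero' ℤ)
  refine (hinj.hasSum_range_iff.2 he).add_isCompl ?_
    (((add_left_injective 1).comp hinj).hasSum_range_iff.2 ho)
  simpa [Function.comp_def] using Int.isCompl_even_odd

lemma norm_pow_lt_one {q : ℂ} (hq : ‖q‖ < 1) {n : ℕ} (hn : n ≠ 0) : ‖q ^ n‖ < 1 := by
  rw [norm_pow]
  exact pow_lt_one₀ (norm_nonneg q) hq hn

lemma summable_pow_self_of_tendsto_zero {a : ℕ → ℝ} (ha : Tendsto a atTop (𝓝 0)) :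
    Summable fun n ↦ a n ^ n := by
  refine Summable.of_norm_bounded_eventually (summable_geometric_of_lt_one (r := 1 / 2)
    (by norm_num) (by norm_num)) ?_
  rw [Nat.cofinite_eq_atTop]
  filter_upwards [ha.norm.eventually_le_const (by norm_num : ‖(0 : ℝ)‖ < 1 / 2)] with n hn
  rw [norm_pow]
  exact pow_le_pow_left₀ (norm_nonneg _) hn n

lemma summable_norm_pow_mul_add {q : ℂ} (hq : ‖q‖ < 1) {a : ℕ} (ha : a ≠ 0) (b : ℕ) :
    Summable fun n : ℕ ↦ ‖q ^ (a * n + b)‖ := by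
  refine ((summable_geometric_of_lt_one (by positivity)
    (pow_lt_one₀ (norm_nonneg q) hq ha)).mul_right (‖q‖ ^ b)).congr fun n ↦ ?_
  rw [norm_pow, pow_add, pow_mul]

lemma summable_norm_zpow_sq_mul_zpow {q : ℂ} (hq : ‖q‖ < 1) (z : ℂ) :
    Summable fun k : ℤ ↦ ‖q ^ (k ^ 2) * z ^ k‖ := by
  have hsummable (w : ℝ) : Summable fun n : ℕ ↦ (‖q‖ ^ n * w) ^ n :=
    summable_pow_self_of_tendsto_zero <| by
      simpa using (tendsto_pow_atTop_nhds_zero_of_lt_one (norm_nonneg q) hq).mul_const w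
  refine .of_nat_of_neg ((hsummable ‖z‖).congr fun n ↦ ?_)
    ((hsummable ‖z‖⁻¹).congr fun n ↦ ?_)
  · rw [show ((n : ℤ) ^ 2) = ((n ^ 2 : ℕ) : ℤ) by push_cast; rfl, zpow_natCast, zpow_natCast,
      norm_mul, norm_pow, norm_pow, mul_pow, ← pow_mul, sq]
  · rw [show ((-n : ℤ) ^ 2) = ((n ^ 2 : ℕ) : ℤ) by push_cast; ring, zpow_natCast, zpow_neg,
      zpow_natCast, norm_mul, norm_pow, norm_inv, norm_pow, mul_pow, ← pow_mul, sq, inv_pow]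

section QPochhammer

variable {p : ℂ}

noncomputable def qPochhammer (p : ℂ) (n : ℕ) : ℂ := ∏ i ∈ range n, (1 - p ^ (i + 1))

-- `1 / (p; p)_n`, extended by zero to `n < 0`: this makes `qPochhammerInv_eq_mul_succ` hold on
-- all of `ℤ`, so the recurrence for `centralGaussBinom` needs no case distinction at `|k| = N`.
noncomputable def qPochhammerInv (p : ℂ) (n : ℤ) : ℂ :=
  if 0 ≤ n then (qPochhammer p n.toNat)⁻¹ else 0

lemma one_sub_pow_succ_ne_zero (hp : ‖p‖ < 1) (n : ℕ) : 1 - p ^ (n + 1) ≠ 0 := by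
  have hlt := norm_pow_lt_one hp n.succ_ne_zero
  rw [sub_ne_zero]
  rintro h
  simp [← h] at hlt

lemma qPochhammer_succ (n : ℕ) : qPochhammer p (n + 1) = qPochhammer p n * (1 - p ^ (n + 1)) :=
  prod_range_succ _ n

lemma qPochhammerInv_eq_mul_succ (hp : ‖p‖ < 1) (n : ℤ) :
    qPochhammerInv p n = (1 - p ^ (n + 1)) * qPochhammerInv p (n + 1) := by
  rcases lt_trichotomy n (-1) with hn | rfl | hn
  · simp [qPochhammerInv, show ¬ 0 ≤ n by omega, show ¬ 0 ≤ n + 1 by omega]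
  · simp [qPochhammerInv]
  lift n to ℕ using (by omega)
  rw [qPochhammerInv, qPochhammerInv, if_pos (by positivity), if_pos (by positivity),
    show ((n : ℤ) + 1) = ((n + 1 : ℕ) : ℤ) by push_cast; rfl, Int.toNat_natCast,
    Int.toNat_natCast, zpow_natCast, qPochhammer_succ, mul_inv, mul_left_comm,
    mul_inv_cancel₀ (one_sub_pow_succ_ne_zero hp n), mul_one]

lemma tendsto_qPochhammer (hp : ‖p‖ < 1) :
    Tendsto (qPochhammer p) atTop (𝓝 (∏' i, (1 - p ^ (i + 1)))) :=
  (ModularForm.multipliable_one_sub_pow hp).hasProd.tendsto_prod_nat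

lemma tprod_one_sub_pow_succ_ne_zero (hp : ‖p‖ < 1) : ∏' i, (1 - p ^ (i + 1)) ≠ 0 := by
  simpa only [sub_eq_add_neg] using tprod_one_add_ne_zero_of_summable (f := fun i ↦ -p ^ (i + 1))
    (fun i ↦ by simpa only [← sub_eq_add_neg] using one_sub_pow_succ_ne_zero hp i)
    (by simpa only [norm_neg, one_mul] using summable_norm_pow_mul_add hp one_ne_zero 1)

lemma tendsto_qPochhammerInv (hp : ‖p‖ < 1) :
    Tendsto (qPochhammerInv p) atTop (𝓝 (∏' i, (1 - p ^ (i + 1)))⁻¹) := by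
  have htoNat : Tendsto Int.toNat atTop atTop :=
    tendsto_atTop_atTop.2 fun b ↦ ⟨b, fun n hn ↦ by omega⟩
  refine (((tendsto_qPochhammer hp).inv₀ (tprod_one_sub_pow_succ_ne_zero hp)).comp
    htoNat).congr' ?_
  filter_upwards [eventually_ge_atTop 0] with n hn
  simp [qPochhammerInv, hn]

-- The Gaussian binomial coefficient `[2N, N + k]` in base `p`, zero unless `|k| ≤ N`.
noncomputable def centralGaussBinom (p : ℂ) (N : ℕ) (k : ℤ) : ℂ :=
  qPochhammer p (2 * N) * qPochhammerInv p (N + k) * qPochhammerInv p (N - k)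

lemma centralGaussBinom_zero (k : ℤ) : centralGaussBinom p 0 k = if k = 0 then 1 else 0 := by
  rcases lt_trichotomy k 0 with hk | rfl | hk
  · simp [centralGaussBinom, qPochhammerInv, hk.ne, hk.not_ge]
  · simp [centralGaussBinom, qPochhammerInv, qPochhammer]
  · simp [centralGaussBinom, qPochhammerInv, hk.ne', hk.not_ge]

lemma centralGaussBinom_succ (hp : ‖p‖ < 1) (hp0 : p ≠ 0) (N : ℕ) (k : ℤ) :
    centralGaussBinom p (N + 1) k =
      (1 + p ^ (2 * N + 1)) * centralGaussBinom p N k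
        + p ^ ((N : ℤ) + 1 - k) * centralGaussBinom p N (k - 1)
        + p ^ ((N : ℤ) + 1 + k) * centralGaussBinom p N (k + 1) := by
  have hQ : qPochhammer p (2 * (N + 1)) =
      qPochhammer p (2 * N) * (1 - p ^ (2 * N + 1)) * (1 - p ^ (2 * N + 2)) := by
    rw [show 2 * (N + 1) = 2 * N + 1 + 1 by ring, qPochhammer_succ, qPochhammer_succ]
  set a : ℤ := N + k
  set b : ℤ := N - k
  have hra := qPochhammerInv_eq_mul_succ hp a
  have hrb := qPochhammerInv_eq_mul_succ hp b
  have hra' := qPochhammerInv_eq_mul_succ hp (a - 1)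
  have hrb' := qPochhammerInv_eq_mul_succ hp (b - 1)
  rw [sub_add_cancel] at hra' hrb'
  have hab : p ^ a * p ^ b = p ^ (2 * N) := by
    rw [← zpow_add₀ hp0, ← zpow_natCast]; congr 1; push_cast; ring
  simp only [centralGaussBinom, hQ]
  rw [show ((N + 1 : ℕ) : ℤ) + k = a + 1 by push_cast; ring,
    show ((N + 1 : ℕ) : ℤ) - k = b + 1 by push_cast; ring,
    show (N : ℤ) + (k - 1) = a - 1 by ring, show (N : ℤ) - (k - 1) = b + 1 by ring,
    show (N : ℤ) + (k + 1) = a + 1 by ring, show (N : ℤ) - (k + 1) = b - 1 by ring,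
    show (N : ℤ) + 1 - k = b + 1 by ring, show (N : ℤ) + 1 + k = a + 1 by ring,
    hra', hrb', hra, hrb, zpow_add_one₀ hp0, zpow_add_one₀ hp0]
  linear_combination -qPochhammer p (2 * N) * qPochhammerInv p (a + 1) * qPochhammerInv p (b + 1) *
    (p ^ 2 * (p ^ a + p ^ b) + p ^ 3 * p ^ (2 * N) - 2 * p - p ^ 2) * hab

lemma tendsto_centralGaussBinom (hp : ‖p‖ < 1) (k : ℤ) :
    Tendsto (centralGaussBinom p · k) atTop (𝓝 (∏' i, (1 - p ^ (i + 1)))⁻¹) := by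
  have hE := tprod_one_sub_pow_succ_ne_zero hp
  have hcast := tendsto_natCast_atTop_atTop (R := ℤ)
  have htwo : Tendsto (2 * ·) atTop atTop :=
    tendsto_atTop_atTop.2 fun b ↦ ⟨b, fun n _ ↦ by omega⟩
  have hlim := (((tendsto_qPochhammer hp).comp htwo).mul
    ((tendsto_qPochhammerInv hp).comp (tendsto_atTop_add_const_right _ k hcast))).mul
    ((tendsto_qPochhammerInv hp).comp (tendsto_atTop_add_const_right _ (-k) hcast))
  rw [mul_inv_cancel₀ hE, one_mul] at hlim
  exact hlim.congr fun N ↦ by simp [centralGaussBinom, sub_eq_add_neg]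

lemma exists_norm_centralGaussBinom_le (hp : ‖p‖ < 1) :
    ∃ C, ∀ N k, ‖centralGaussBinom p N k‖ ≤ C := by
  obtain ⟨A, hA⟩ := (tendsto_qPochhammer hp).norm.bddAbove_range
  obtain ⟨B, hB⟩ :=
    ((tendsto_qPochhammer hp).inv₀ (tprod_one_sub_pow_succ_ne_zero hp)).norm.bddAbove_range
  have hB0 : 0 ≤ B := (norm_nonneg _).trans (hB ⟨0, rfl⟩)
  have hInv (n : ℤ) : ‖qPochhammerInv p n‖ ≤ B := by
    unfold qPochhammerInv
    split_ifs
    · exact hB ⟨n.toNat, rfl⟩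
    · simpa using hB0
  refine ⟨A * B * B, fun N k ↦ ?_⟩
  rw [centralGaussBinom, norm_mul, norm_mul]
  have hA0 : 0 ≤ A := (norm_nonneg _).trans (hA ⟨0, rfl⟩)
  exact mul_le_mul (mul_le_mul (hA ⟨2 * N, rfl⟩) (hInv _) (norm_nonneg _) hA0) (hInv _)
    (norm_nonneg _) (mul_nonneg hA0 hB0)

lemma norm_centralGaussBinom_mul_le {C : ℝ} (hC : ∀ N k, ‖centralGaussBinom p N k‖ ≤ C)
    (N : ℕ) (k : ℤ) (w : ℂ) : ‖centralGaussBinom p N k * w‖ ≤ C * ‖w‖ := by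
  rw [norm_mul]
  exact mul_le_mul_of_nonneg_right (hC N k) (norm_nonneg w)

lemma summable_centralGaussBinom_mul {q : ℂ} (hp : ‖p‖ < 1) (hq : ‖q‖ < 1) (z : ℂ)
    (N : ℕ) :
    Summable fun k : ℤ ↦ centralGaussBinom p N k * (q ^ (k ^ 2) * z ^ k) := by
  obtain ⟨C, hC⟩ := exists_norm_centralGaussBinom_le hp
  exact .of_norm_bounded ((summable_norm_zpow_sq_mul_zpow hq z).mul_left C)
    fun k ↦ norm_centralGaussBinom_mul_le hC N k _

end QPochhammer

section JacobiTripleProduct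

variable {q z : ℂ}

lemma zpow_sq_mul_zpow_sub_one_mul (hq0 : q ≠ 0) (hz : z ≠ 0) (N : ℕ) (k : ℤ) :
    (q ^ 2) ^ ((N : ℤ) + 1 - k) * (q ^ (k ^ 2) * z ^ k) =
      q ^ ((k - 1) ^ 2) * z ^ (k - 1) * (z * q ^ (2 * N + 1)) := by
  rw [← zpow_natCast q (2 * N + 1), ← zpow_natCast q 2, ← zpow_mul, Nat.cast_ofNat,
    zpow_sub_one₀ hz, show (k - 1) ^ 2 = 2 * ((N : ℤ) + 1 - k) + k ^ 2 -
      ((2 * N + 1 : ℕ) : ℤ) by push_cast; ring, zpow_sub₀ hq0, zpow_add₀ hq0]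
  field_simp

lemma zpow_sq_mul_zpow_add_one_mul (hq0 : q ≠ 0) (hz : z ≠ 0) (N : ℕ) (k : ℤ) :
    (q ^ 2) ^ ((N : ℤ) + 1 + k) * (q ^ (k ^ 2) * z ^ k) =
      q ^ ((k + 1) ^ 2) * z ^ (k + 1) * (z⁻¹ * q ^ (2 * N + 1)) := by
  rw [← zpow_natCast q (2 * N + 1), ← zpow_natCast q 2, ← zpow_mul, Nat.cast_ofNat,
    zpow_add_one₀ hz, show (k + 1) ^ 2 = 2 * ((N : ℤ) + 1 + k) + k ^ 2 -
      ((2 * N + 1 : ℕ) : ℤ) by push_cast; ring, zpow_sub₀ hq0, zpow_add₀ hq0]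
  field_simp

lemma prod_range_mul_prod_range_eq_tsum_centralGaussBinom (hq : ‖q‖ < 1) (hq0 : q ≠ 0)
    (hz : z ≠ 0) (N : ℕ) :
    (∏ j ∈ range N, (1 + z * q ^ (2 * j + 1))) *
        ∏ j ∈ range N, (1 + z⁻¹ * q ^ (2 * j + 1)) =
      ∑' k : ℤ, centralGaussBinom (q ^ 2) N k * (q ^ (k ^ 2) * z ^ k) := by
  have hp := norm_pow_lt_one hq two_ne_zero
  induction N with
  | zero =>
    rw [tsum_eq_single 0 fun k hk ↦ by simp [centralGaussBinom_zero, hk]]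
    simp [centralGaussBinom_zero]
  | succ N ih =>
    set T := fun k : ℤ ↦ centralGaussBinom (q ^ 2) N k * (q ^ (k ^ 2) * z ^ k)
    have hT : Summable T := summable_centralGaussBinom_mul hp hq z N
    have hT_sub : Summable fun k ↦ T (k - 1) := hT.comp_injective (sub_left_injective (b := 1))
    have hT_add : Summable fun k ↦ T (k + 1) := hT.comp_injective (add_left_injective 1)
    set x := q ^ (2 * N + 1)
    have hterm (k : ℤ) : centralGaussBinom (q ^ 2) (N + 1) k * (q ^ (k ^ 2) * z ^ k) =
        T k * (1 + x ^ 2) + T (k - 1) * (z * x) + T (k + 1) * (z⁻¹ * x) := by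
      rw [centralGaussBinom_succ hp (pow_ne_zero 2 hq0)]
      linear_combination centralGaussBinom (q ^ 2) N (k - 1) *
          zpow_sq_mul_zpow_sub_one_mul hq0 hz N k +
        centralGaussBinom (q ^ 2) N (k + 1) * zpow_sq_mul_zpow_add_one_mul hq0 hz N k
    have hshift_sub : ∑' k, T (k - 1) = ∑' k, T k := (Equiv.subRight 1).tsum_eq T
    have hshift_add : ∑' k, T (k + 1) = ∑' k, T k := (Equiv.addRight 1).tsum_eq T
    calc (∏ j ∈ range (N + 1), (1 + z * q ^ (2 * j + 1))) *
          ∏ j ∈ range (N + 1), (1 + z⁻¹ * q ^ (2 * j + 1))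
        = (∑' k, T k) * ((1 + z * x) * (1 + z⁻¹ * x)) := by
          rw [prod_range_succ, prod_range_succ, ← ih]; ring
      _ = ∑' k, T k * (1 + x ^ 2) + ∑' k, T (k - 1) * (z * x) +
            ∑' k, T (k + 1) * (z⁻¹ * x) := by
          rw [tsum_mul_right, tsum_mul_right, tsum_mul_right, hshift_sub, hshift_add]
          field_simp
          ring
      _ = _ := by
          rw [← (hT.mul_right _).tsum_add (hT_sub.mul_right _),
            ← ((hT.mul_right _).add (hT_sub.mul_right _)).tsum_add (hT_add.mul_right _)]
          exact tsum_congr fun k ↦ (hterm k).symm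

theorem hasSum_jacobiTripleProduct (hq : ‖q‖ < 1) (hq0 : q ≠ 0) (hz : z ≠ 0) :
    HasSum (fun k : ℤ ↦ q ^ (k ^ 2) * z ^ k)
      ((∏' n : ℕ, (1 - q ^ (2 * n + 2))) * (∏' n : ℕ, (1 + z * q ^ (2 * n + 1))) *
        ∏' n : ℕ, (1 + z⁻¹ * q ^ (2 * n + 1))) := by
  have hp := norm_pow_lt_one hq two_ne_zero
  have hE : ∏' n : ℕ, (1 - q ^ (2 * n + 2)) = ∏' i, (1 - (q ^ 2) ^ (i + 1)) :=
    tprod_congr fun n ↦ by ring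
  have htendsto_prod (w : ℂ) :
      Tendsto (fun N ↦ ∏ j ∈ range N, (1 + w * q ^ (2 * j + 1))) atTop
        (𝓝 (∏' n : ℕ, (1 + w * q ^ (2 * n + 1)))) :=
    (multipliable_one_add_of_summable (by simpa only [norm_mul] using
      (summable_norm_pow_mul_add hq two_ne_zero 1).mul_left ‖w‖)).hasProd.tendsto_prod_nat
  obtain ⟨C, hC⟩ := exists_norm_centralGaussBinom_le hp
  have hlim := tendsto_tsum_of_dominated_convergence
    ((summable_norm_zpow_sq_mul_zpow hq z).mul_left C)
    (fun k ↦ (tendsto_centralGaussBinom hp k).mul_const (q ^ (k ^ 2) * z ^ k))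
    (.of_forall fun N k ↦ norm_centralGaussBinom_mul_le hC N k _)
  have hprod := tendsto_nhds_unique ((htendsto_prod z).mul (htendsto_prod z⁻¹))
    (hlim.congr fun N ↦ (prod_range_mul_prod_range_eq_tsum_centralGaussBinom hq hq0 hz N).symm)
  rw [tsum_mul_left] at hprod
  rw [mul_assoc, hprod, hE, mul_inv_cancel_left₀ (tprod_one_sub_pow_succ_ne_zero hp)]
  exact (summable_norm_zpow_sq_mul_zpow hq z).of_norm.hasSum

theorem hasSum_zpow_sq (hq : ‖q‖ < 1) (hq0 : q ≠ 0) :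
    HasSum (fun k : ℤ ↦ q ^ (k ^ 2))
      ((∏' n : ℕ, (1 - q ^ (2 * n + 2))) * (∏' n : ℕ, (1 + q ^ (2 * n + 1))) ^ 2) := by
  simpa only [one_zpow, mul_one, one_mul, inv_one, sq, mul_assoc] using
    hasSum_jacobiTripleProduct hq hq0 one_ne_zero

theorem hasSum_zpow_sq_add_self (hq : ‖q‖ < 1) (hq0 : q ≠ 0) :
    HasSum (fun k : ℤ ↦ q ^ (k ^ 2 + k))
      (2 * (∏' n : ℕ, (1 - q ^ (2 * n + 2))) * (∏' n : ℕ, (1 + q ^ (2 * n + 2))) ^ 2) := by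
  have hmul : Multipliable fun n : ℕ ↦ 1 + q ^ (2 * (n + 1)) :=
    multipliable_one_add_of_summable (summable_norm_pow_mul_add hq two_ne_zero 2)
  have hfirst : ∏' n : ℕ, (1 + q * q ^ (2 * n + 1)) = ∏' n : ℕ, (1 + q ^ (2 * n + 2)) :=
    tprod_congr fun n ↦ by ring
  have hsecond :
      ∏' n : ℕ, (1 + q⁻¹ * q ^ (2 * n + 1)) = 2 * ∏' n : ℕ, (1 + q ^ (2 * n + 2)) := by
    have hshift (n : ℕ) : 1 + q⁻¹ * q ^ (2 * n + 1) = 1 + q ^ (2 * n) := by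
      rw [pow_succ', inv_mul_cancel_left₀ hq0]
    rw [tprod_congr hshift, tprod_eq_zero_mul' (f := fun n ↦ 1 + q ^ (2 * n)) hmul]
    simp only [mul_add, mul_one, mul_zero, pow_zero]
    norm_num
  convert hasSum_jacobiTripleProduct hq hq0 hq0 using 1
  · simp only [zpow_add₀ hq0]
  · rw [hfirst, hsecond]; ring

theorem hasSum_zpow_two_mul_sq (hq : ‖q‖ < 1) (hq0 : q ≠ 0) :
    HasSum (fun k : ℤ ↦ q ^ ((2 * k) ^ 2))
      ((∏' m : ℕ, (1 - q ^ (8 * m + 8))) * (∏' m : ℕ, (1 + q ^ (8 * m + 4))) ^ 2) := by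
  have hterm (k : ℤ) : q ^ ((2 * k) ^ 2) = (q ^ 4) ^ (k ^ 2) := by
    rw [← zpow_natCast, ← zpow_mul]; congr 1; push_cast; ring
  have hpow (a n : ℕ) : (q ^ 4) ^ (2 * n + a) = q ^ (8 * n + 4 * a) := by ring
  have h := hasSum_zpow_sq (norm_pow_lt_one hq four_ne_zero) (pow_ne_zero 4 hq0)
  simp only [hpow, Nat.reduceMul] at h
  rw [funext hterm]
  exact h

theorem hasSum_zpow_two_mul_add_one_sq (hq : ‖q‖ < 1) (hq0 : q ≠ 0) :
    HasSum (fun k : ℤ ↦ q ^ ((2 * k + 1) ^ 2))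
      (q * (2 * (∏' m : ℕ, (1 - q ^ (8 * m + 8))) *
        (∏' m : ℕ, (1 + q ^ (8 * m + 8))) ^ 2)) := by
  have hterm (k : ℤ) : q ^ ((2 * k + 1) ^ 2) = q * (q ^ 4) ^ (k ^ 2 + k) := by
    rw [← zpow_natCast, ← zpow_mul, ← zpow_one_add₀ hq0]; congr 1; push_cast; ring
  have hpow (a n : ℕ) : (q ^ 4) ^ (2 * n + a) = q ^ (8 * n + 4 * a) := by ring
  have h := (hasSum_zpow_sq_add_self (norm_pow_lt_one hq four_ne_zero)
    (pow_ne_zero 4 hq0)).mul_left q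
  simp only [hpow, Nat.reduceMul] at h
  rw [funext hterm]
  exact h

end JacobiTripleProduct

theorem stmt_18 (q : ℂ) (hq : ‖q‖ < 1) :
    (∑' m : ℤ, q ^ (m ^ 2)) =
      (∏' m : ℕ, (1 - q ^ (8 * m + 8))) *
        ((∏' m : ℕ, (1 + q ^ (8 * m + 4))) ^ 2
          + 2 * q * (∏' m : ℕ, (1 + q ^ (8 * m + 8))) ^ 2) := by
  rcases eq_or_ne q 0 with rfl | hq0
  · rw [tsum_eq_single 0 fun m hm ↦ zero_zpow _ (pow_ne_zero 2 hm)]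
    simp
  rw [(HasSum.int_even_add_odd (f := fun m : ℤ ↦ q ^ (m ^ 2)) (hasSum_zpow_two_mul_sq hq hq0)
    (hasSum_zpow_two_mul_add_one_sq hq hq0)).tsum_eq]
  ring
end
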